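/- arXiv:1008.0310 — 9 statements merged into one kernel-verified Lean document; each statement's English description precedes it below -/
import Mathlib

section
/- The Boros-Moll coefficients satisfy the recurrence d_i(m+1) = ((m+i)/(m+1)) · d_{i-1}(m) + ((4m+2i+3)/(2(m+1))) · d_i(m) for 0 ≤ i ≤ m+1 (with d_{-1}(m) = 0 and d_{m+1}(m) = 0). -/
open Finset

/-- summand of `bmd` -/
private def Scoef (m j k : ℕ) : ℚ :=
  2 ^ k * ((2 * m - 2 * k).choose (m - k) : ℚ) * ((m + k).choose k : ℚ) * (k.choose j : ℚ)

/-- value of `C(k, j-1)` with the convention that it is `0` for `j = 0` -/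
private def Acoef (j k : ℕ) : ℚ :=
  if j = 0 then 0 else (k.choose (j - 1) : ℚ)

/-- telescoping certificate -/
private def Gfun (m j k : ℕ) : ℚ :=
  -(2 * k) * 2 ^ k * ((2 * (m + 1) - 2 * k).choose (m + 1 - k) : ℚ) *
    ((m + k).choose k : ℚ) * (k.choose j : ℚ)

private lemma key_alg (m k j b1 b1' b2 b2' b2'' b3 b3'' A : ℚ)
    (h1 : (m - k + 1) * b1' = (4 * m - 4 * k + 2) * b1)
    (h2 : (m + 1) * b2' = (m + k + 1) * b2)
    (h3 : (k + 1) * b2'' = (m + k + 1) * b2)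
    (h4 : b3'' = b3 + A)
    (h5 : j * b3 = (k + 1 - j) * A) :
    (m + 1) * (b1' * b2' * b3)
      = 4 * (m + j) * (b1 * b2 * A) + 2 * (4 * m + 2 * j + 3) * (b1 * b2 * b3)
        + ((-(2 * (k + 1)) * 2 * (b1 * b2'' * b3'')) - (-(2 * k) * (b1' * b2 * b3))) := by
  linear_combination (b2 * b3) * h1 + (b1' * b3) * h2 + (4 * b1 * b3'') * h3
    + (4 * (m + k + 1) * b1 * b2) * h4 - (4 * b1 * b2) * h5

private lemma h5_fact (k j : ℕ) :
    (j : ℚ) * (k.choose j : ℚ) = ((k : ℚ) + 1 - j) * Acoef j k := by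
  cases j with
  | zero => simp [Acoef]
  | succ s =>
    simp only [Acoef, Nat.succ_ne_zero, if_false, Nat.succ_sub_one]
    rcases le_or_gt s k with h | h
    · have := Nat.choose_succ_right_eq k s
      have hc : ((k.choose (s + 1) * (s + 1) : ℕ) : ℚ) = ((k.choose s * (k - s) : ℕ) : ℚ) := by
        exact_mod_cast congrArg (Nat.cast : ℕ → ℚ) this
      push_cast [Nat.cast_sub h] at hc
      push_cast
      linarith [hc]
    · have h1 : k.choose (s + 1) = 0 := Nat.choose_eq_zero_of_lt (by omega)
      have h2 : k.choose s = 0 := Nat.choose_eq_zero_of_lt h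
      simp [h1, h2]

private lemma h4_fact (k j : ℕ) :
    ((k + 1).choose j : ℚ) = (k.choose j : ℚ) + Acoef j k := by
  cases j with
  | zero => simp [Acoef]
  | succ s =>
    simp only [Acoef, Nat.succ_ne_zero, if_false, Nat.succ_sub_one]
    rw [Nat.choose_succ_succ]
    push_cast
    ring

private lemma perk (m j k : ℕ) (hk : k ≤ m) :
    ((m : ℚ) + 1) * Scoef (m + 1) j k
      = 4 * ((m : ℚ) + j) *
          (2 ^ k * ((2 * m - 2 * k).choose (m - k) : ℚ) * ((m + k).choose k : ℚ) * Acoef j k)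
        + 2 * (4 * (m : ℚ) + 2 * j + 3) * Scoef m j k
        + (Gfun m j (k + 1) - Gfun m j k) := by
  obtain ⟨v, rfl⟩ : ∃ v, m = k + v := ⟨m - k, by omega⟩
  have e1 : 2 * (k + v + 1) - 2 * k = 2 * v + 2 := by omega
  have e2 : k + v + 1 - k = v + 1 := by omega
  have e3 : 2 * (k + v) - 2 * k = 2 * v := by omega
  have e4 : k + v - k = v := by omega
  have e5 : 2 * (k + v + 1) - 2 * (k + 1) = 2 * v := by omega
  have e6 : k + v + 1 - (k + 1) = v := by omega
  simp only [Scoef, Gfun, e1, e2, e3, e4, e5, e6]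
  -- set up the algebraic atoms
  have hb1 : ((v : ℚ) + 1) * (((2 * v + 2).choose (v + 1) : ℕ) : ℚ)
      = (2 * (2 * (v : ℚ) + 1)) * (((2 * v).choose v : ℕ) : ℚ) := by
    have := Nat.succ_mul_centralBinom_succ v
    simp only [Nat.centralBinom] at this
    have hc := congrArg (Nat.cast : ℕ → ℚ) this
    rw [show 2 * (v + 1) = 2 * v + 2 by ring] at hc
    push_cast at hc
    push_cast
    linear_combination hc
  have hb2 : ((k : ℚ) + v + 1) * (((k + v + 1 + k).choose k : ℕ) : ℚ)
      = ((k : ℚ) + v + (k : ℚ) + 1) * (((k + v + k).choose k : ℕ) : ℚ) := by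
    have h := Nat.add_one_mul_choose_eq (k + v + k) (k + v)
    have hsym1 : (k + v + k).choose (k + v) = (k + v + k).choose k := by
      apply Nat.choose_symm_of_eq_add; omega
    have hsym2 : (k + v + k + 1).choose (k + v + 1) = (k + v + 1 + k).choose k := by
      rw [show k + v + k + 1 = (k + v + 1) + k by omega]
      exact Nat.choose_symm_add
    rw [hsym1, hsym2] at h
    have hc := congrArg (Nat.cast : ℕ → ℚ) h
    push_cast at hc
    push_cast
    linear_combination -hc
  have hb3 : ((k : ℚ) + 1) * (((k + v + (k + 1)).choose (k + 1) : ℕ) : ℚ)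
      = ((k : ℚ) + v + (k : ℚ) + 1) * (((k + v + k).choose k : ℕ) : ℚ) := by
    have h := Nat.add_one_mul_choose_eq (k + v + k) k
    rw [show k + v + k + 1 = k + v + (k + 1) by omega] at h
    have hc := congrArg (Nat.cast : ℕ → ℚ) h
    push_cast at hc
    push_cast
    linear_combination -hc
  have hh4 := h4_fact k j
  have hh5 := h5_fact k j
  have key := key_alg ((k : ℚ) + v) k j
    (((2 * v).choose v : ℕ) : ℚ) (((2 * v + 2).choose (v + 1) : ℕ) : ℚ)
    (((k + v + k).choose k : ℕ) : ℚ) (((k + v + 1 + k).choose k : ℕ) : ℚ)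
    (((k + v + (k + 1)).choose (k + 1) : ℕ) : ℚ)
    ((k.choose j : ℕ) : ℚ) (((k + 1).choose j : ℕ) : ℚ) (Acoef j k)
    (by push_cast; linear_combination hb1) (by push_cast; linear_combination hb2)
    (by push_cast; linear_combination hb3) hh4 hh5
  push_cast
  push_cast at key
  linear_combination (2:ℚ)^k * key

private lemma boundary (m j : ℕ) :
    ((m : ℚ) + 1) * Scoef (m + 1) j (m + 1) = -Gfun m j (m + 1) := by
  have e1 : 2 * (m + 1) - 2 * (m + 1) = 0 := by omega
  have e2 : m + 1 - (m + 1) = 0 := by omega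
  simp only [Scoef, Gfun, e1, e2, Nat.choose_self]
  have hdb : ((m + 1 + (m + 1)).choose (m + 1) : ℕ) = 2 * ((m + (m + 1)).choose (m + 1)) := by
    rw [show m + 1 + (m + 1) = (m + (m + 1)) + 1 by omega]
    rw [Nat.choose_succ_succ' (m + (m + 1)) m]
    have : (m + (m + 1)).choose m = (m + (m + 1)).choose (m + 1) := by
      apply Nat.choose_symm_of_eq_add; omega
    rw [show m + (m+1) = (m) + (m+1) from rfl]
    omega
  rw [hdb]
  push_cast
  ring

/-- The main sum identity. -/
private lemma main_sum (m j : ℕ) :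
    ((m : ℚ) + 1) * ∑ k ∈ range (m + 2), Scoef (m + 1) j k
      = 4 * ((m : ℚ) + j) * ∑ k ∈ range (m + 1),
          (2 ^ k * ((2 * m - 2 * k).choose (m - k) : ℚ) * ((m + k).choose k : ℚ) * Acoef j k)
        + 2 * (4 * (m : ℚ) + 2 * j + 3) * ∑ k ∈ range (m + 1), Scoef m j k := by
  rw [Finset.sum_range_succ, mul_add, boundary]
  have tele : ∑ k ∈ range (m + 1), (Gfun m j (k + 1) - Gfun m j k)
      = Gfun m j (m + 1) - Gfun m j 0 := Finset.sum_range_sub _ _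
  have hG0 : Gfun m j 0 = 0 := by simp [Gfun]
  have hsum : ((m : ℚ) + 1) * ∑ k ∈ range (m + 1), Scoef (m + 1) j k
      = ∑ k ∈ range (m + 1),
          (4 * ((m : ℚ) + j) *
              (2 ^ k * ((2 * m - 2 * k).choose (m - k) : ℚ) * ((m + k).choose k : ℚ) * Acoef j k)
            + 2 * (4 * (m : ℚ) + 2 * j + 3) * Scoef m j k
            + (Gfun m j (k + 1) - Gfun m j k)) := by
    rw [Finset.mul_sum]
    apply Finset.sum_congr rfl
    intro k hk
    exact perk m j k (by simpa using Nat.lt_succ_iff.mp (Finset.mem_range.mp hk))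
  rw [hsum, Finset.sum_add_distrib, Finset.sum_add_distrib, tele, hG0,
    ← Finset.mul_sum, ← Finset.mul_sum]
  ring

/-- For any `j`, the `Icc j m` sum equals the `range (m+1)` sum. -/
private lemma icc_eq_range (m j : ℕ) :
    ∑ k ∈ Finset.Icc j m, Scoef m j k = ∑ k ∈ range (m + 1), Scoef m j k := by
  apply Finset.sum_subset
  · intro k hk
    simp only [Finset.mem_Icc] at hk
    simp only [Finset.mem_range]
    omega
  · intro k hk hnk
    simp only [Finset.mem_range] at hk
    simp only [Finset.mem_Icc] at hnk
    have : k < j := by omega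
    simp [Scoef, Nat.choose_eq_zero_of_lt this]

private lemma two_zpow (n : ℕ) : (2 : ℚ) ^ (-(2 * (n : ℤ))) = ((2 : ℚ) ^ (2 * n))⁻¹ := by
  rw [zpow_neg]
  congr 1

/-- Boros-Moll coefficient `d_i(m)`, with the convention that it is `0`
for `i < 0` or `i > m` (the sum is empty in the latter case). -/
def bmd (i : ℤ) (m : ℕ) : ℚ :=
  if 0 ≤ i then
    (2 : ℚ) ^ (-(2 * (m : ℤ))) *
      ∑ k ∈ Finset.Icc i.toNat m,
        (2 : ℚ) ^ k * (Nat.choose (2 * m - 2 * k) (m - k)) *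
          (Nat.choose (m + k) k) * (Nat.choose k i.toNat)
  else 0

private lemma bmd_eq (j m : ℕ) :
    bmd (j : ℤ) m = ((2 : ℚ) ^ (2 * m))⁻¹ * ∑ k ∈ range (m + 1), Scoef m j k := by
  rw [bmd, if_pos (by positivity), Int.toNat_natCast, two_zpow, ← icc_eq_range]
  rfl

theorem bmd_recurrence1 (m : ℕ) (i : ℤ) (hi : 0 ≤ i) (him : i ≤ (m : ℤ) + 1) :
    bmd i (m + 1) =
      ((m : ℚ) + (i : ℚ)) / ((m : ℚ) + 1) * bmd (i - 1) m +
        (4 * (m : ℚ) + 2 * (i : ℚ) + 3) / (2 * ((m : ℚ) + 1)) * bmd i m := by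
  obtain ⟨j, rfl⟩ : ∃ j : ℕ, i = (j : ℤ) := ⟨i.toNat, (Int.toNat_of_nonneg hi).symm⟩
  have hL : bmd (j : ℤ) (m + 1)
      = ((2 : ℚ) ^ (2 * (m + 1)))⁻¹ * ∑ k ∈ range (m + 2), Scoef (m + 1) j k := by
    have := bmd_eq j (m + 1)
    simpa using this
  have hR : bmd (j : ℤ) m = ((2 : ℚ) ^ (2 * m))⁻¹ * ∑ k ∈ range (m + 1), Scoef m j k :=
    bmd_eq j m
  have hpow : ((2 : ℚ) ^ (2 * m)) ≠ 0 := by positivity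
  have hpow2 : (2 : ℚ) ^ (2 * (m + 1)) = 4 * (2 : ℚ) ^ (2 * m) := by ring
  have hmain := main_sum m j
  have hA : bmd ((j : ℤ) - 1) m
      = ((2 : ℚ) ^ (2 * m))⁻¹ * ∑ k ∈ range (m + 1),
          (2 ^ k * ((2 * m - 2 * k).choose (m - k) : ℚ) * ((m + k).choose k : ℚ) * Acoef j k) := by
    cases j with
    | zero =>
      rw [show ((0 : ℕ) : ℤ) - 1 = (-1 : ℤ) by ring, bmd, if_neg (by omega)]
      simp [Acoef]
    | succ s =>
      have h1 : ((s + 1 : ℕ) : ℤ) - 1 = (s : ℤ) := by push_cast; ring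
      rw [h1, bmd_eq s m]
      refine congrArg _ (Finset.sum_congr rfl fun k _ => ?_)
      simp [Scoef, Acoef]
  rw [hL, hR, hA]
  have hm1 : ((m : ℚ) + 1) ≠ 0 := by positivity
  rw [hpow2]
  field_simp
  push_cast
  linear_combination 2 * hmain
end

section
/- The Boros-Moll coefficients satisfy the recurrence d_i(m+1) = ((4m-2i+3)(m+i+1))/(2(m+1)(m+1-i)) · d_i(m) − (i(i+1))/((m+1)(m+1-i)) · d_{i+1}(m) for 0 ≤ i ≤ m. -/
namespace BmdAux

/-- The summand of `4^m · d_l(m)`. -/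
def fB (m k l : ℕ) : ℚ :=
  (2 : ℚ) ^ k * (Nat.choose (2 * m - 2 * k) (m - k)) *
    (Nat.choose (m + k) k) * (Nat.choose k l)

/-- The telescoping certificate. -/
def HB (m l k : ℕ) : ℚ :=
  -(4 * ((m : ℚ) + 1) * ((l : ℚ) + 1)) * (2 : ℚ) ^ k *
    (Nat.choose (2 * (m + 1 - k)) (m + 1 - k)) * (Nat.choose (m + k) k) *
    (Nat.choose k (l + 1))

lemma tele (f : ℕ → ℚ) (a b : ℕ) (h : a ≤ b) :
    ∑ k ∈ Finset.Icc a b, (f (k + 1) - f k) = f (b + 1) - f a := by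
  induction b, h using Nat.le_induction with
  | base => simp
  | succ n hn ih =>
      rw [Finset.sum_Icc_succ_top (by omega), ih]; ring

/-- Central binomial step, cast to ℚ. -/
lemma central (j : ℕ) :
    ((Nat.choose (2 * j + 2) (j + 1) : ℚ)) * ((j : ℚ) + 1)
      = 2 * (2 * (j : ℚ) + 1) * (Nat.choose (2 * j) j) := by
  have h := Nat.succ_mul_centralBinom_succ j
  have h' : (j + 1) * Nat.choose (2 * j + 2) (j + 1) = 2 * (2 * j + 1) * Nat.choose (2 * j) j := by
    simpa [Nat.centralBinom, Nat.mul_succ] using h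
  have := congrArg (fun n : ℕ => (n : ℚ)) h'
  push_cast at this
  linarith

/-- The key per-`k` identity. -/
lemma key (m l k : ℕ) (hlk : l ≤ k) (hkm : k ≤ m) :
    2 * ((m : ℚ) + 1) * ((m : ℚ) + 1 - (l : ℚ)) * fB (m + 1) k l
      - 4 * (4 * (m : ℚ) - 2 * (l : ℚ) + 3) * ((m : ℚ) + (l : ℚ) + 1) * fB m k l
      + 8 * (l : ℚ) * ((l : ℚ) + 1) * fB m k (l + 1)
    = HB m l (k + 1) - HB m l k := by
  obtain ⟨j, rfl⟩ : ∃ j, m = k + j := ⟨m - k, by omega⟩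
  simp only [fB, HB]
  rw [show 2 * (k + j + 1) - 2 * k = 2 * j + 2 from by omega,
      show (k + j + 1) - k = j + 1 from by omega,
      show 2 * (k + j) - 2 * k = 2 * j from by omega,
      show (k + j) - k = j from by omega,
      show (k + j) + 1 - (k + 1) = j from by omega,
      show (k + j + 1) + k = (k + j) + k + 1 from by omega,
      show (k + j) + (k + 1) = (k + j) + k + 1 from by omega,
      show 2 * (j + 1) = 2 * j + 2 from by omega]
  -- names for the binomial coefficients
  have hA := central j
  have hB' : ((Nat.choose ((k + j) + k + 1) k : ℚ)) * ((k : ℚ) + (j : ℚ) + 1)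
      = ((k : ℚ) + (j : ℚ) + 1 + (k : ℚ)) * (Nat.choose ((k + j) + k) k) := by
    have h := Nat.choose_mul_succ_eq ((k + j) + k) k
    rw [show (k + j) + k + 1 - k = k + j + 1 from by omega] at h
    have := congrArg (fun n : ℕ => (n : ℚ)) h
    push_cast at this
    linarith
  have hC : ((Nat.choose k (l + 1) : ℚ)) * ((l : ℚ) + 1)
      = ((k : ℚ) - (l : ℚ)) * (Nat.choose k l) := by
    have h := Nat.choose_succ_right_eq k l
    have := congrArg (fun n : ℕ => (n : ℚ)) h
    push_cast [Nat.cast_sub hlk] at this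
    linarith
  have hD : ((Nat.choose ((k + j) + k + 1) (k + 1) : ℚ)) * ((k : ℚ) + 1)
      = ((k : ℚ) + (j : ℚ) + (k : ℚ) + 1) * (Nat.choose ((k + j) + k) k) := by
    have h := Nat.add_one_mul_choose_eq ((k + j) + k) k
    have := congrArg (fun n : ℕ => (n : ℚ)) h
    push_cast at this
    linarith
  have hE : ((Nat.choose (k + 1) (l + 1) : ℚ)) * ((l : ℚ) + 1)
      = ((k : ℚ) + 1) * (Nat.choose k l) := by
    have h := Nat.add_one_mul_choose_eq k l
    have := congrArg (fun n : ℕ => (n : ℚ)) h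
    push_cast at this
    linarith
  -- clear the goal by multiplying with positive factors
  have hj : ((j : ℚ) + 1) ≠ 0 := by positivity
  have hm : ((k : ℚ) + (j : ℚ) + 1) ≠ 0 := by positivity
  have hl : ((l : ℚ) + 1) ≠ 0 := by positivity
  have hk : ((k : ℚ) + 1) ≠ 0 := by positivity
  have eA : ((Nat.choose (2 * j + 2) (j + 1) : ℚ))
      = 2 * (2 * (j : ℚ) + 1) * (Nat.choose (2 * j) j) / ((j : ℚ) + 1) := by
    field_simp; linear_combination hA
  have eB : ((Nat.choose ((k + j) + k + 1) k : ℚ))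
      = ((k : ℚ) + (j : ℚ) + 1 + (k : ℚ)) * (Nat.choose ((k + j) + k) k) / ((k : ℚ) + (j : ℚ) + 1) := by
    field_simp; linear_combination hB'
  have eC : ((Nat.choose k (l + 1) : ℚ))
      = ((k : ℚ) - (l : ℚ)) * (Nat.choose k l) / ((l : ℚ) + 1) := by
    field_simp; linear_combination hC
  have eD : ((Nat.choose ((k + j) + k + 1) (k + 1) : ℚ))
      = ((k : ℚ) + (j : ℚ) + (k : ℚ) + 1) * (Nat.choose ((k + j) + k) k) / ((k : ℚ) + 1) := by
    field_simp; linear_combination hD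
  have eE : ((Nat.choose (k + 1) (l + 1) : ℚ))
      = ((k : ℚ) + 1) * (Nat.choose k l) / ((l : ℚ) + 1) := by
    field_simp; linear_combination hE
  push_cast
  rw [eA, eB, eC, eD, eE]
  field_simp
  ring

/-- Value of the certificate at the bottom of the range. -/
lemma HB_bot (m l : ℕ) : HB m l l = 0 := by
  simp [HB, Nat.choose_eq_zero_of_lt (Nat.lt_succ_self l)]

/-- The boundary identity at `k = m+1`. -/
lemma HB_top (m l : ℕ) (hlm : l ≤ m) :
    HB m l (m + 1) + 2 * ((m : ℚ) + 1) * ((m : ℚ) + 1 - (l : ℚ)) * fB (m + 1) (m + 1) l = 0 := by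
  simp only [HB, fB, Nat.sub_self, Nat.mul_zero, Nat.choose_zero_right, Nat.choose_self]
  have h1 : ((Nat.choose (m + 1) (l + 1) : ℚ)) * ((l : ℚ) + 1)
      = ((m : ℚ) + 1 - (l : ℚ)) * (Nat.choose (m + 1) l) := by
    have h := Nat.choose_succ_right_eq (m + 1) l
    have := congrArg (fun n : ℕ => (n : ℚ)) h
    push_cast [Nat.cast_sub (by omega : l ≤ m + 1)] at this
    linarith
  have h2 : (Nat.choose (m + 1 + (m + 1)) (m + 1) : ℚ) = 2 * (Nat.choose (m + (m + 1)) (m + 1)) := by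
    have h : Nat.choose (m + 1 + (m + 1)) (m + 1) = 2 * Nat.choose (m + (m + 1)) (m + 1) := by
      have hsymm : Nat.choose (m + (m + 1)) m = Nat.choose (m + (m + 1)) (m + 1) := by
        have h3 := Nat.choose_symm (n := m + (m + 1)) (k := m + 1) (by omega)
        rw [show m + (m + 1) - (m + 1) = m from by omega] at h3
        omega
      rw [show m + 1 + (m + 1) = (m + (m + 1)) + 1 from by omega, Nat.choose_succ_succ]
      simp only [Nat.succ_eq_add_one]
      omega
    exact_mod_cast congrArg (fun n : ℕ => (n : ℚ)) h
  have hl : ((l : ℚ) + 1) ≠ 0 := by positivity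
  have e1 : ((Nat.choose (m + 1) (l + 1) : ℚ))
      = ((m : ℚ) + 1 - (l : ℚ)) * (Nat.choose (m + 1) l) / ((l : ℚ) + 1) := by
    field_simp; linear_combination h1
  push_cast
  rw [e1, h2]
  field_simp
  ring

/-- The main summed identity. -/
lemma main_sum (m l : ℕ) (hlm : l ≤ m) :
    2 * ((m : ℚ) + 1) * ((m : ℚ) + 1 - (l : ℚ)) * (∑ k ∈ Finset.Icc l (m + 1), fB (m + 1) k l)
      = 4 * (4 * (m : ℚ) - 2 * (l : ℚ) + 3) * ((m : ℚ) + (l : ℚ) + 1) *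
          (∑ k ∈ Finset.Icc l m, fB m k l)
        - 8 * (l : ℚ) * ((l : ℚ) + 1) * (∑ k ∈ Finset.Icc (l + 1) m, fB m k (l + 1)) := by
  have hins : Finset.Icc l m = insert l (Finset.Icc (l + 1) m) := by
    ext x; simp only [Finset.mem_Icc, Finset.mem_insert]; omega
  have hsum3 : ∑ k ∈ Finset.Icc l m, fB m k (l + 1)
      = ∑ k ∈ Finset.Icc (l + 1) m, fB m k (l + 1) := by
    rw [hins, Finset.sum_insert (by simp [Finset.mem_Icc])]
    simp [fB, Nat.choose_eq_zero_of_lt (Nat.lt_succ_self l)]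
  have htel : ∑ k ∈ Finset.Icc l m, (HB m l (k + 1) - HB m l k)
      = HB m l (m + 1) - HB m l l := tele _ _ _ hlm
  have hkey : ∑ k ∈ Finset.Icc l m,
      (2 * ((m : ℚ) + 1) * ((m : ℚ) + 1 - (l : ℚ)) * fB (m + 1) k l
        - 4 * (4 * (m : ℚ) - 2 * (l : ℚ) + 3) * ((m : ℚ) + (l : ℚ) + 1) * fB m k l
        + 8 * (l : ℚ) * ((l : ℚ) + 1) * fB m k (l + 1))
      = HB m l (m + 1) - HB m l l := by
    rw [← htel]
    refine Finset.sum_congr rfl fun k hk => ?_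
    rw [Finset.mem_Icc] at hk
    exact key m l k hk.1 hk.2
  rw [Finset.sum_Icc_succ_top (by omega)]
  have hexp : ∑ k ∈ Finset.Icc l m,
      (2 * ((m : ℚ) + 1) * ((m : ℚ) + 1 - (l : ℚ)) * fB (m + 1) k l
        - 4 * (4 * (m : ℚ) - 2 * (l : ℚ) + 3) * ((m : ℚ) + (l : ℚ) + 1) * fB m k l
        + 8 * (l : ℚ) * ((l : ℚ) + 1) * fB m k (l + 1))
      = 2 * ((m : ℚ) + 1) * ((m : ℚ) + 1 - (l : ℚ)) * (∑ k ∈ Finset.Icc l m, fB (m + 1) k l)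
        - 4 * (4 * (m : ℚ) - 2 * (l : ℚ) + 3) * ((m : ℚ) + (l : ℚ) + 1) *
            (∑ k ∈ Finset.Icc l m, fB m k l)
        + 8 * (l : ℚ) * ((l : ℚ) + 1) * (∑ k ∈ Finset.Icc l m, fB m k (l + 1)) := by
    rw [Finset.sum_add_distrib, Finset.sum_sub_distrib, ← Finset.mul_sum, ← Finset.mul_sum,
      ← Finset.mul_sum]
  rw [hexp] at hkey
  have hbot := HB_bot m l
  have htop := HB_top m l hlm
  rw [hsum3] at hkey
  linarith [hkey, htop]

end BmdAux

theorem bmd_recurrence2 (m : ℕ) (i : ℤ) (hi : 0 ≤ i) (him : i ≤ (m : ℤ)) :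
    bmd i (m + 1) =
      (4 * (m : ℚ) - 2 * (i : ℚ) + 3) * ((m : ℚ) + (i : ℚ) + 1) /
          (2 * ((m : ℚ) + 1) * ((m : ℚ) + 1 - (i : ℚ))) * bmd i m -
        (i : ℚ) * ((i : ℚ) + 1) / (((m : ℚ) + 1) * ((m : ℚ) + 1 - (i : ℚ))) *
          bmd (i + 1) m := by
  obtain ⟨l, rfl⟩ := Int.eq_ofNat_of_zero_le hi
  have hlm : l ≤ m := by exact_mod_cast him
  have h1 : ((l : ℤ)).toNat = l := by simp
  have h2 : ((l : ℤ) + 1).toNat = l + 1 := by omega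
  have hcast : ((l : ℤ) : ℚ) = (l : ℚ) := by push_cast; ring
  rw [show ((l : ℤ) + 1) = ((l + 1 : ℕ) : ℤ) from by push_cast; ring]
  simp only [bmd, if_pos (by positivity : (0:ℤ) ≤ ((l:ℕ):ℤ)),
    if_pos (by positivity : (0:ℤ) ≤ (((l+1:ℕ)):ℤ)), Int.toNat_natCast]
  have hzp : ∀ n : ℕ, (2 : ℚ) ^ (-(2 * (n : ℤ))) = ((2 : ℚ) ^ (2 * n))⁻¹ := by
    intro n
    rw [zpow_neg, show (2 * (n : ℤ)) = ((2 * n : ℕ) : ℤ) from by push_cast; ring, zpow_natCast]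
  rw [hzp, hzp]
  have key := BmdAux.main_sum m l hlm
  simp only [BmdAux.fB] at key
  have hm1 : ((m : ℚ) + 1) ≠ 0 := by positivity
  have hml : ((m : ℚ) + 1 - (l : ℚ)) ≠ 0 := by
    have : (l : ℚ) ≤ (m : ℚ) := by exact_mod_cast hlm
    linarith [this]
  have hpow : ((2 : ℚ) ^ (2 * m)) ≠ 0 := by positivity
  have hpow2 : (2 : ℚ) ^ (2 * (m + 1)) = 4 * (2 : ℚ) ^ (2 * m) := by
    rw [show 2 * (m + 1) = 2 * m + 2 from by ring, pow_add]; ring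
  rw [hcast, hpow2]
  field_simp
  linear_combination key
end

section
/- The Boros-Moll coefficients satisfy (m+2-i)(m+i-1) · d_{i-2}(m) − (i-1)(2m+1) · d_{i-1}(m) + i(i-1) · d_i(m) = 0 for 0 ≤ i ≤ m+1. -/
/-- The summand without the binomial `C(k,n)` factor. -/
def bmA (m k : ℕ) : ℚ :=
  (2 : ℚ) ^ k * (Nat.choose (2 * m - 2 * k) (m - k)) * (Nat.choose (m + k) k)

/-- Telescoping certificate. -/
def bmg (m n k : ℕ) : ℚ :=
  if k ≤ m then
    bmA m k * (Nat.choose k n) * ((k : ℚ) - n) * (2 * k - 2 * m - 1)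
  else 0

/-- The combined polynomial factor. -/
def bmP (m n k : ℕ) : ℚ :=
  ((m : ℚ) - n) * ((m : ℚ) + n + 1) - (2 * (m : ℚ) + 1) * ((k : ℚ) - n)
    + ((k : ℚ) - n - 1) * ((k : ℚ) - n)

lemma chooseq (k j : ℕ) :
    ((j : ℚ) + 1) * (Nat.choose k (j + 1)) = ((k : ℚ) - j) * (Nat.choose k j) := by
  rcases le_or_gt j k with h | h
  · have h1 : (Nat.choose k (j+1) * (j+1) : ℕ) = (Nat.choose k j * (k - j) : ℕ) :=
      Nat.choose_succ_right_eq k j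
    have h2 : ((Nat.choose k (j+1) * (j+1) : ℕ) : ℚ) = ((Nat.choose k j * (k - j) : ℕ) : ℚ) := by
      exact_mod_cast congrArg (Nat.cast : ℕ → ℚ) h1
    push_cast [h] at h2
    linarith
  · simp [Nat.choose_eq_zero_of_lt h, Nat.choose_eq_zero_of_lt (h.trans (Nat.lt_succ_self j))]

lemma bm_bracket (m n k : ℕ) :
    ((m : ℚ) - n) * ((m : ℚ) + n + 1) * (Nat.choose k n)
      - ((n : ℚ) + 1) * (2 * (m : ℚ) + 1) * (Nat.choose k (n + 1))
      + ((n : ℚ) + 2) * ((n : ℚ) + 1) * (Nat.choose k (n + 2))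
    = (Nat.choose k n) * bmP m n k := by
  have h1 := chooseq k n
  have h2 := chooseq k (n + 1)
  simp only [bmP]
  push_cast at h2 ⊢
  linear_combination ((k : ℚ) - n - 2 * (m : ℚ) - 2) * h1 + ((n : ℚ) + 1) * h2

lemma bm_step (m n k : ℕ) (hk : k ≤ m) :
    bmA m k * (Nat.choose k n) * bmP m n k = bmg m n k - bmg m n (k + 1) := by
  rcases lt_or_ge k n with hn | hn
  · -- trivial case `k < n`
    have hc : Nat.choose k n = 0 := Nat.choose_eq_zero_of_lt hn
    have hg1 : bmg m n k = 0 := by simp [bmg, hc]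
    have hg2 : bmg m n (k + 1) = 0 := by
      rcases lt_or_eq_of_le (Nat.succ_le_of_lt hn) with h | h
      · simp [bmg, Nat.choose_eq_zero_of_lt h]
      · simp [bmg, ← h]
    rw [hg1, hg2, hc]
    simp
  · rcases eq_or_lt_of_le hk with rfl | hkm
    · -- boundary case `k = m`
      have hg2 : bmg k n (k + 1) = 0 := by
        rw [bmg, if_neg (by omega)]
      rw [hg2, sub_zero, bmg, if_pos le_rfl, bmA, bmP]
      ring
    · -- main case `n ≤ k < m`
      have hk1 : k + 1 ≤ m := hkm
      set t := m - (k + 1) with ht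
      have e1 : 2 * m - 2 * k = 2 * t + 2 := by omega
      have e2 : m - k = t + 1 := by omega
      have e3 : 2 * m - 2 * (k + 1) = 2 * t := by omega
      have e4 : m - (k + 1) = t := rfl
      have hm : (m : ℚ) = (t : ℚ) + k + 1 := by
        have : m = t + (k + 1) := by omega
        exact_mod_cast congrArg (Nat.cast : ℕ → ℚ) this
      -- the three multiplicative binomial identities, over ℚ
      have h1 : ((t : ℚ) + 1) * (Nat.choose (2 * t + 2) (t + 1))
          = 2 * (2 * (t : ℚ) + 1) * (Nat.choose (2 * t) t) := by
        have := Nat.succ_mul_centralBinom_succ t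
        simp only [Nat.centralBinom] at this
        have h' : ((t + 1) * Nat.choose (2 * (t + 1)) (t + 1) : ℕ)
            = (2 * (2 * t + 1) * Nat.choose (2 * t) t : ℕ) := this
        have h'' := congrArg (Nat.cast : ℕ → ℚ) h'
        push_cast at h''
        rw [show 2 * (t + 1) = 2 * t + 2 by ring] at h''
        linarith
      have h2 : ((m : ℚ) + k + 1) * (Nat.choose (m + k) k)
          = (Nat.choose (m + k + 1) (k + 1)) * ((k : ℚ) + 1) := by
        have := Nat.add_one_mul_choose_eq (m + k) k
        have h'' := congrArg (Nat.cast : ℕ → ℚ) this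
        push_cast at h''
        linarith
      have h3 : ((k : ℚ) + 1) * (Nat.choose k n)
          = (Nat.choose (k + 1) n) * ((k : ℚ) + 1 - n) := by
        have a := Nat.add_one_mul_choose_eq k n
        have b := Nat.choose_succ_right_eq (k + 1) n
        have h' : (k + 1) * Nat.choose k n = Nat.choose (k + 1) n * (k + 1 - n) := by
          rw [← b]; exact a
        have h'' := congrArg (Nat.cast : ℕ → ℚ) h'
        push_cast [Nat.cast_sub (show n ≤ k + 1 by omega)] at h''
        linarith
      -- nonvanishing denominators
      have hne1 : ((k : ℚ) + 1) ≠ 0 := by positivity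
      have hnq : (n : ℚ) ≤ (k : ℚ) := by exact_mod_cast hn
      have hne2 : ((k : ℚ) + 1 - n) ≠ 0 := by
        intro h; nlinarith [h]
      have hne3 : ((t : ℚ) + 1) ≠ 0 := by positivity
      -- solve the relations
      have hc' : ((Nat.choose (k + 1) n : ℚ)) = ((k : ℚ) + 1) * (Nat.choose k n) / ((k : ℚ) + 1 - n) := by
        rw [eq_div_iff hne2]; linear_combination -h3
      have hA' : ((Nat.choose (2 * t + 2) (t + 1) : ℚ))
          = 2 * (2 * (t : ℚ) + 1) * (Nat.choose (2 * t) t) / ((t : ℚ) + 1) := by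
        rw [eq_div_iff hne3]; linear_combination h1
      have hb' : ((Nat.choose (m + k + 1) (k + 1) : ℚ))
          = ((m : ℚ) + k + 1) * (Nat.choose (m + k) k) / ((k : ℚ) + 1) := by
        rw [eq_div_iff hne1]; linear_combination -h2
      rw [bmg, bmg, if_pos hk, if_pos hk1, bmA, bmA, bmP]
      rw [e1, e2, e3, e4, show m + (k + 1) = m + k + 1 by ring]
      rw [hc', hA', hb', hm]
      have hne4 : 2 * ((t : ℚ) + k + 1) - 2 * k - 1 ≠ 0 := by
        intro h
        have : (0:ℚ) ≤ (t:ℚ) := Nat.cast_nonneg t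
        nlinarith [h]
      field_simp
      push_cast
      ring

lemma bm_sum (m n : ℕ) :
    ∑ k ∈ Finset.range (m + 1), bmA m k * (Nat.choose k n) * bmP m n k = 0 := by
  have h : ∀ k ∈ Finset.range (m + 1),
      bmA m k * (Nat.choose k n) * bmP m n k = bmg m n k - bmg m n (k + 1) := by
    intro k hk
    exact bm_step m n k (by simpa [Nat.lt_succ_iff] using Finset.mem_range.mp hk)
  rw [Finset.sum_congr rfl h, Finset.sum_range_sub' (bmg m n) (m + 1)]
  have hg0 : bmg m n 0 = 0 := by
    rcases n with _ | n <;> simp [bmg]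
  have hgtop : bmg m n (m + 1) = 0 := by
    rw [bmg, if_neg (by omega)]
  rw [hg0, hgtop, sub_zero]

lemma icc_eq (m t : ℕ) :
    (∑ k ∈ Finset.Icc t m, (2 : ℚ) ^ k * (Nat.choose (2 * m - 2 * k) (m - k)) *
        (Nat.choose (m + k) k) * (Nat.choose k t))
    = ∑ k ∈ Finset.range (m + 1), (2 : ℚ) ^ k * (Nat.choose (2 * m - 2 * k) (m - k)) *
        (Nat.choose (m + k) k) * (Nat.choose k t) := by
  apply Finset.sum_subset
  · intro x hx
    simp only [Finset.mem_Icc] at hx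
    simp only [Finset.mem_range]
    omega
  · intro x hx hx'
    simp only [Finset.mem_range] at hx
    simp only [Finset.mem_Icc] at hx'
    have : x < t := by omega
    simp [Nat.choose_eq_zero_of_lt this]

lemma bmd_nat (m t : ℕ) :
    bmd (t : ℤ) m = (2 : ℚ) ^ (-(2 * (m : ℤ))) *
      ∑ k ∈ Finset.range (m + 1), (2 : ℚ) ^ k * (Nat.choose (2 * m - 2 * k) (m - k)) *
        (Nat.choose (m + k) k) * (Nat.choose k t) := by
  rw [bmd, if_pos (Int.natCast_nonneg t), Int.toNat_natCast, icc_eq]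

theorem bmd_recurrence4 (m : ℕ) (i : ℤ) (hi : 0 ≤ i) (him : i ≤ (m : ℤ) + 1) :
    ((m : ℚ) + 2 - (i : ℚ)) * ((m : ℚ) + (i : ℚ) - 1) * bmd (i - 2) m -
        ((i : ℚ) - 1) * (2 * (m : ℚ) + 1) * bmd (i - 1) m +
        (i : ℚ) * ((i : ℚ) - 1) * bmd i m = 0 := by
  lift i to ℕ using hi with j
  rcases j with _ | _ | n
  · -- i = 0
    have h1 : bmd ((0 : ℕ) - 2 : ℤ) m = 0 := by
      rw [bmd, if_neg (by norm_num)]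
    have h2 : bmd ((0 : ℕ) - 1 : ℤ) m = 0 := by
      rw [bmd, if_neg (by norm_num)]
    rw [h1, h2]
    push_cast
    ring
  · -- i = 1
    have h1 : bmd ((1 : ℕ) - 2 : ℤ) m = 0 := by
      rw [bmd, if_neg (by norm_num)]
    rw [h1]
    push_cast
    ring
  · -- i = n + 2
    rw [show ((n + 2 : ℕ) : ℤ) - 2 = ((n : ℕ) : ℤ) by push_cast; ring,
        show ((n + 2 : ℕ) : ℤ) - 1 = ((n + 1 : ℕ) : ℤ) by push_cast; ring,
        show ((n + 2 : ℕ) : ℤ) = ((n + 2 : ℕ) : ℤ) from rfl]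
    rw [bmd_nat m n, bmd_nat m (n + 1), bmd_nat m (n + 2)]
    have hsum : ((m : ℚ) - n) * ((m : ℚ) + n + 1) *
          (∑ k ∈ Finset.range (m + 1), (2 : ℚ) ^ k * (Nat.choose (2 * m - 2 * k) (m - k)) *
            (Nat.choose (m + k) k) * (Nat.choose k n))
        - ((n : ℚ) + 1) * (2 * (m : ℚ) + 1) *
          (∑ k ∈ Finset.range (m + 1), (2 : ℚ) ^ k * (Nat.choose (2 * m - 2 * k) (m - k)) *
            (Nat.choose (m + k) k) * (Nat.choose k (n + 1)))
        + ((n : ℚ) + 2) * ((n : ℚ) + 1) *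
          (∑ k ∈ Finset.range (m + 1), (2 : ℚ) ^ k * (Nat.choose (2 * m - 2 * k) (m - k)) *
            (Nat.choose (m + k) k) * (Nat.choose k (n + 2))) = 0 := by
      rw [Finset.mul_sum, Finset.mul_sum, Finset.mul_sum, ← Finset.sum_sub_distrib,
        ← Finset.sum_add_distrib]
      rw [← bm_sum m n]
      apply Finset.sum_congr rfl
      intro k _
      have hb := bm_bracket m n k
      simp only [bmA]
      push_cast at hb ⊢
      linear_combination ((2 : ℚ) ^ k * (Nat.choose (2 * m - 2 * k) (m - k) : ℚ) *
        (Nat.choose (m + k) k : ℚ)) * hb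
    push_cast at hsum ⊢
    linear_combination ((2 : ℚ) ^ (-(2 * (m : ℤ)))) * hsum
end

section
/- For every integer n ≥ 0, d_n(n+1) = 2^{-(n+2)} · (2n+3) · binomial(2n+2, n+1). -/
theorem bmd_n_succ (n : ℕ) :
    bmd n (n + 1) =
      (2 : ℚ) ^ (-((n : ℤ) + 2)) * (2 * (n : ℚ) + 3) *
        (Nat.choose (2 * n + 2) (n + 1)) := by
  have hC : (2 * n + 2).choose (n + 1) = 2 * (2 * n + 1).choose n := by
    have h1 : (2 * n + 2).choose (n + 1)
        = (2 * n + 1).choose n + (2 * n + 1).choose (n + 1) :=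
      Nat.choose_succ_succ (2 * n + 1) n
    have h2 := Nat.choose_symm (show n + 1 ≤ 2 * n + 1 by omega)
    rw [show 2 * n + 1 - (n + 1) = n by omega] at h2
    omega
  unfold bmd
  rw [if_pos (by positivity)]
  rw [Int.toNat_natCast, show Finset.Icc n (n + 1) = {n, n + 1} by
    ext x; simp [Finset.mem_Icc]; omega]
  rw [Finset.sum_insert (by simp), Finset.sum_singleton]
  have e1 : 2 * (n + 1) - 2 * n = 2 := by omega
  have e2 : (n + 1) - n = 1 := by omega
  have e3 : 2 * (n + 1) - 2 * (n + 1) = 0 := by omega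
  have e4 : (n + 1) - (n + 1) = 0 := by omega
  have e5 : (n + 1) + n = 2 * n + 1 := by omega
  have e6 : (n + 1) + (n + 1) = 2 * n + 2 := by omega
  have hz1 : (2 : ℚ) ^ (-(2 * ((n + 1 : ℕ) : ℤ))) = ((2 : ℚ) ^ (2 * n + 2))⁻¹ := by
    rw [zpow_neg, ← zpow_natCast]
    congr 1
  have hz2 : (2 : ℚ) ^ (-((n : ℤ) + 2)) = ((2 : ℚ) ^ (n + 2))⁻¹ := by
    rw [zpow_neg, ← zpow_natCast]
    congr 1
  rw [e1, e2, e3, e4, e5, e6, Nat.choose_zero_right, Nat.choose_self, hC, hz1, hz2]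
  push_cast [Nat.choose_succ_self_right, Nat.choose]
  field_simp
  ring
end

section
/- For every integer n ≥ 0, d_n(n+2) = ((n+1)(4n²+18n+21))/(2^{n+4}(2n+3)) · binomial(2n+4, n+2). -/
theorem bmd_n_succ_succ (n : ℕ) :
    bmd n (n + 2) =
      ((n : ℚ) + 1) * (4 * (n : ℚ) ^ 2 + 18 * (n : ℚ) + 21) /
          ((2 : ℚ) ^ (n + 4) * (2 * (n : ℚ) + 3)) *
        (Nat.choose (2 * n + 4) (n + 2)) := by
  have h1' : (2*n+4) * Nat.choose (2*n+3) (n+1) = (n+2) * Nat.choose (2*n+4) (n+2) := by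
    rw [Nat.mul_comm (n+2)]; exact Nat.add_one_mul_choose_eq (2*n+3) (n+1)
  have h2' : (2*n+3) * Nat.choose (2*n+2) n = (n+1) * Nat.choose (2*n+3) (n+1) := by
    rw [Nat.mul_comm (n+1)]; exact Nat.add_one_mul_choose_eq (2*n+2) n
  have h3' : 2 * Nat.choose (n+1+1) n = (n+2) * (n+1) := by
    have hsym : Nat.choose (n+2) n = Nat.choose (n+2) 2 := by
      rw [← Nat.choose_symm (by omega : 2 ≤ n+2)]
      congr 1
    have h := Nat.add_one_mul_choose_eq (n+1) 1
    rw [Nat.choose_one_right] at h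
    show 2 * Nat.choose (n+2) n = (n+2) * (n+1)
    rw [hsym, Nat.mul_comm]
    exact h.symm
  have h1 : ((2:ℚ)*n+4) * (Nat.choose (2*n+3) (n+1)) =
      ((n:ℚ)+2) * (Nat.choose (2*n+4) (n+2)) := by exact_mod_cast h1'
  have h2 : ((2:ℚ)*n+3) * (Nat.choose (2*n+2) n) =
      ((n:ℚ)+1) * (Nat.choose (2*n+3) (n+1)) := by exact_mod_cast h2'
  have h3 : (2:ℚ) * (Nat.choose (n+1+1) n) = ((n:ℚ)+2) * ((n:ℚ)+1) := by exact_mod_cast h3'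
  rw [bmd, if_pos (Int.natCast_nonneg n)]
  rw [Int.toNat_natCast]
  rw [show n + 2 = (n+1) + 1 from rfl,
    Finset.sum_Icc_succ_top (by omega : n ≤ n+1+1),
    Finset.sum_Icc_succ_top (by omega : n ≤ n+1),
    Finset.Icc_self, Finset.sum_singleton]
  have e1 : 2*(n+1+1) - 2*n = 4 := by omega
  have e2 : n+1+1 - n = 2 := by omega
  have e3 : n+1+1+n = 2*n+2 := by omega
  have e4 : 2*(n+1+1) - 2*(n+1) = 2 := by omega
  have e5 : n+1+1 - (n+1) = 1 := by omega
  have e6 : n+1+1+(n+1) = 2*n+3 := by omega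
  have e7 : 2*(n+1+1) - 2*(n+1+1) = 0 := by omega
  have e8 : n+1+1 - (n+1+1) = 0 := by omega
  have e9 : n+1+1+(n+1+1) = 2*n+4 := by omega
  rw [e1, e2, e3, e4, e5, e6, e7, e8, e9, Nat.choose_self n,
    Nat.choose_succ_self_right n,
    show Nat.choose 4 2 = 6 from rfl, show Nat.choose 2 1 = 2 from rfl,
    show Nat.choose 0 0 = 1 from rfl]
  have hB : (Nat.choose (2*n+3) (n+1) : ℚ) =
      ((n:ℚ)+2) * (Nat.choose (2*n+4) (n+2)) / (2*(n:ℚ)+4) := by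
    field_simp
    linarith [h1]
  have hA : (Nat.choose (2*n+2) n : ℚ) =
      ((n:ℚ)+1) * (((n:ℚ)+2) * (Nat.choose (2*n+4) (n+2)) / (2*(n:ℚ)+4)) / (2*(n:ℚ)+3) := by
    rw [← hB]
    field_simp
    linarith [h2]
  have hC : (Nat.choose (n+1+1) n : ℚ) = ((n:ℚ)+2)*((n:ℚ)+1)/2 := by
    field_simp; linarith [h3]
  rw [hA, hB, hC,
    show (-(2 * ((n+1+1 : ℕ) : ℤ))) = -((2*n+4 : ℕ) : ℤ) by push_cast; ring,
    zpow_neg, zpow_natCast]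
  have h0 : (2:ℚ)*(n:ℚ)+3 ≠ 0 := by positivity
  have h0' : (2:ℚ)*(n:ℚ)+4 ≠ 0 := by positivity
  have hp : ((2:ℚ)^(2*n+4)) ≠ 0 := by positivity
  have hp2 : ((2:ℚ)^(n+4)) ≠ 0 := by positivity
  push_cast
  field_simp
  ring_nf
end

section
/- For every integer n ≥ 0, d_n(n+1)/d_{n+1}(n+1) = (2n+3)/2. -/
theorem bmd_ratio (n : ℕ) :
    bmd n (n + 1) / bmd (n + 1) (n + 1) = (2 * (n : ℚ) + 3) / 2 := by
  have h1 : ((n : ℤ)).toNat = n := by simp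
  have h2 : ((n : ℤ) + 1).toNat = n + 1 := by omega
  have hC : (2 * (n + 1)).choose (n + 1) = 2 * (2 * n + 1).choose n := by
    have hsym : (2 * n + 1).choose (n + 1) = (2 * n + 1).choose n := by
      rw [← Nat.choose_symm (by omega)]
      congr 1
      omega
    have : 2 * (n + 1) = (2 * n + 1) + 1 := by ring
    rw [this, Nat.choose_succ_succ, hsym]
    ring
  rw [bmd, bmd, if_pos (by positivity), if_pos (by positivity), h1, h2,
    Finset.Icc_self, Finset.sum_singleton,
    show Finset.Icc n (n + 1) = insert n {n + 1} by ext x; simp [Finset.mem_Icc]; omega,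
    Finset.sum_insert (by simp), Finset.sum_singleton]
  have e1 : 2 * (n + 1) - 2 * n = 2 := by omega
  have e2 : (n + 1) - n = 1 := by omega
  rw [e1, e2]
  simp only [Nat.sub_self, Nat.choose_self, Nat.choose_zero_right, Nat.choose_one_right,
    Nat.choose_succ_self_right, hC]
  have hpos : (0 : ℚ) < (2 * n + 1).choose n := by
    exact_mod_cast Nat.choose_pos (by omega)
  have hne : ((2 * n + 1).choose n : ℚ) ≠ 0 := ne_of_gt hpos
  have h2ne : (2 : ℚ) ^ n ≠ 0 := by positivity
  have hzne : (2 : ℚ) ^ (-(2 * ((n : ℤ) + 1))) ≠ 0 := by positivity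
  have hadd : (n + 1) + (n + 1) = 2 * (n + 1) := by ring
  have hadd2 : (n + 1) + n = 2 * n + 1 := by omega
  rw [hadd, hadd2, hC]
  push_cast
  rw [pow_succ]
  field_simp
  ring
end

section
/- For all integers m ≥ 2 and 0 ≤ i ≤ m−1, the Boros-Moll coefficients satisfy (2i+4m+3) · d_i(m) · d_{i+1}(m+1) > (2i+4m+5) · d_i(m+1) · d_{i+1}(m). -/
open Finset

/-- summand without the `choose k i` factor -/
def bmc (m k : ℕ) : ℚ :=
  2 ^ k * (Nat.choose (2 * m - 2 * k) (m - k)) * (Nat.choose (m + k) k)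

/-- unnormalized Boros-Moll coefficient -/
def bmD (m i : ℕ) : ℚ := ∑ k ∈ range (m + 1), bmc m k * (Nat.choose k i)

lemma bmc_pos (m k : ℕ) : 0 < bmc m k := by
  unfold bmc
  have h1 : 0 < Nat.choose (2 * m - 2 * k) (m - k) :=
    Nat.choose_pos (by omega)
  have h2 : 0 < Nat.choose (m + k) k := Nat.choose_pos (by omega)
  positivity

lemma bmD_nonneg (m i : ℕ) : 0 ≤ bmD m i := by
  apply Finset.sum_nonneg
  intro k _
  have := (bmc_pos m k).le
  positivity

lemma bmD_pos (m i : ℕ) (h : i ≤ m) : 0 < bmD m i := by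
  apply Finset.sum_pos' (fun k _ => by have := (bmc_pos m k).le; positivity)
  refine ⟨m, by simp, ?_⟩
  have h1 := bmc_pos m m
  have h2 : 0 < Nat.choose m i := Nat.choose_pos h
  have h2' : (0:ℚ) < Nat.choose m i := by exact_mod_cast h2
  positivity

lemma bmD_eq_zero (m i : ℕ) (h : m < i) : bmD m i = 0 := by
  apply Finset.sum_eq_zero
  intro k hk
  simp only [mem_range] at hk
  rw [Nat.choose_eq_zero_of_lt (by omega)]
  simp

lemma bmd_eq_s9 (i m : ℕ) : bmd (i : ℤ) m = (2 : ℚ) ^ (-(2 * (m : ℤ))) * bmD m i := by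
  unfold bmd
  rw [if_pos (by positivity), Int.toNat_natCast]
  congr 1
  have h : ∑ k ∈ Finset.Icc i m,
      (2:ℚ) ^ k * (Nat.choose (2 * m - 2 * k) (m - k)) *
          (Nat.choose (m + k) k) * (Nat.choose k i)
      = ∑ k ∈ range (m+1),
      (2:ℚ) ^ k * (Nat.choose (2 * m - 2 * k) (m - k)) *
          (Nat.choose (m + k) k) * (Nat.choose k i) := by
    apply Finset.sum_subset
    · intro x hx
      simp only [mem_Icc] at hx
      simp only [mem_range]
      omega
    · intro x hx hx'
      simp only [mem_range] at hx
      simp only [mem_Icc, not_and, not_le] at hx'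
      have hxi : x < i := by
        rcases lt_or_ge x i with h | h
        · exact h
        · exact absurd (hx' h) (by omega)
      rw [Nat.choose_eq_zero_of_lt hxi]
      simp
  rw [h, bmD]
  exact Finset.sum_congr rfl (fun k _ => by rw [bmc])

lemma key_central (m : ℕ) :
    ((m:ℚ)+1) * ((2*m+2).choose (m+1)) = 2*(2*(m:ℚ)+1) * ((2*m).choose m) := by
  have h := Nat.succ_mul_centralBinom_succ m
  simp only [Nat.centralBinom, Nat.mul_succ] at h
  exact_mod_cast h

lemma key1 (m j : ℕ) (h : j + 1 ≤ m) :
    ((m:ℚ)+1) * bmc (m+1) (j+1)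
      = 4*((m:ℚ)+(j:ℚ)+1) * bmc m j + 2*(2*(m:ℚ)-2*(j:ℚ)-1) * bmc m (j+1) := by
  obtain ⟨n, rfl⟩ : ∃ n, m = j + 1 + n := ⟨m - (j+1), by omega⟩
  unfold bmc
  rw [show 2*(j+1+n+1) - 2*(j+1) = 2*n+2 from by omega,
      show (j+1+n+1) - (j+1) = n+1 from by omega,
      show 2*(j+1+n) - 2*j = 2*n+2 from by omega,
      show (j+1+n) - j = n+1 from by omega,
      show 2*(j+1+n) - 2*(j+1) = 2*n from by omega,
      show (j+1+n) - (j+1) = n from by omega,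
      show (j+1+n+1) + (j+1) = (j+1+n) + j + 2 from by omega,
      show (j+1+n) + (j+1) = (j+1+n) + j + 1 from by omega]
  set M := j + 1 + n with hM
  have F1 : ((n:ℚ)+1) * ((2*n+2).choose (n+1)) = 2*(2*(n:ℚ)+1) * ((2*n).choose n) :=
    key_central n
  have F2 : ((j:ℚ)+1) * ((M+j+1).choose (j+1)) = ((M:ℚ)+j+1) * ((M+j).choose j) := by
    have h2 : ((M:ℚ)+j+1) * ((M+j).choose j) = ((M+j+1).choose (j+1)) * ((j:ℚ)+1) := by
      exact_mod_cast Nat.add_one_mul_choose_eq (M+j) j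
    linarith [h2]
  have F3 : ((M:ℚ)+1) * ((M+j+2).choose (j+1)) = ((M:ℚ)+(j:ℚ)+2) * ((M+j+1).choose (j+1)) := by
    have h3' := Nat.choose_mul_succ_eq (M+j+1) (j+1)
    rw [show M+j+1+1 - (j+1) = M+1 from by omega] at h3'
    have h3 : ((M+j+1).choose (j+1)) * ((M:ℚ)+j+2) = ((M+j+2).choose (j+1)) * ((M:ℚ)+1) := by
      exact_mod_cast h3'
    linarith [h3]
  have hMQ : (M:ℚ) = (j:ℚ) + 1 + (n:ℚ) := by rw [hM]; push_cast; ring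
  rw [hMQ] at F2 F3 ⊢
  push_cast
  linear_combination (2*(2:ℚ)^j * ((2*n+2).choose (n+1))) * F3
    + (2*(2:ℚ)^j * (((j+1+n)+j+1).choose (j+1))) * F1
    + (4*(2:ℚ)^j * ((2*n+2).choose (n+1))) * F2

lemma key_top (m : ℕ) :
    ((m:ℚ)+1) * bmc (m+1) (m+1) = 4*(2*(m:ℚ)+1) * bmc m m := by
  unfold bmc
  rw [show 2*(m+1) - 2*(m+1) = 0 from by omega, show (m+1)-(m+1) = 0 from by omega,
      show 2*m - 2*m = 0 from by omega, show m - m = 0 from by omega,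
      show (m+1)+(m+1) = 2*m+2 from by omega, show m + m = 2*m from by omega]
  have := key_central m
  simp only [Nat.choose_self, Nat.cast_one]
  linear_combination ((2:ℚ)^(m+1)) * this

lemma key_zero (m : ℕ) :
    ((m:ℚ)+1) * bmc (m+1) 0 = 2*(2*(m:ℚ)+1) * bmc m 0 := by
  unfold bmc
  rw [show 2*(m+1) - 2*0 = 2*m+2 from by omega, show (m+1)-0 = m+1 from by omega,
      show 2*m - 2*0 = 2*m from by omega, show m-0 = m from by omega]
  simp only [Nat.add_zero, Nat.choose_zero_right, Nat.cast_one, pow_zero]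
  have := key_central m
  linear_combination this

/-- `(j - i) * C(j,i) = (i+1) * C(j,i+1)` over ℚ, valid for all j, i. -/
lemma key2 (j i : ℕ) :
    ((j:ℚ) - (i:ℚ)) * (j.choose i) = ((i:ℚ)+1) * (j.choose (i+1)) := by
  rcases le_or_gt i j with h | h
  · have h' := Nat.choose_succ_right_eq j i
    have h'' : (j.choose (i+1)) * ((i:ℚ)+1) = (j.choose i) * ((j:ℚ) - (i:ℚ)) := by
      have : ((j - i : ℕ) : ℚ) = (j:ℚ) - (i:ℚ) := by
        push_cast [h]; ring
      rw [← this]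
      exact_mod_cast h'
    linarith
  · rw [Nat.choose_eq_zero_of_lt h, Nat.choose_eq_zero_of_lt (by omega)]
    simp

lemma recD (m i : ℕ) :
    ((m:ℚ)+1) * bmD (m+1) (i+1)
      = 4*((m:ℚ)+(i:ℚ)+1) * bmD m i + 2*(2*(i:ℚ)+4*(m:ℚ)+5) * bmD m (i+1) := by
  have step1 : ((m:ℚ)+1) * bmD (m+1) (i+1)
      = ∑ k ∈ range (m+2), ((m:ℚ)+1) * bmc (m+1) k * ((k).choose (i+1)) := by
    rw [bmD, Finset.mul_sum]
    exact Finset.sum_congr rfl (fun k _ => by ring)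
  rw [step1, Finset.sum_range_succ']
  simp only [Nat.choose_zero_succ, Nat.cast_zero, mul_zero]
  rw [add_zero]
  have step2 : ∀ j ∈ range (m+1),
      ((m:ℚ)+1) * bmc (m+1) (j+1) * ((j+1).choose (i+1))
      = 4*((m:ℚ)+(j:ℚ)+1) * bmc m j * ((j+1).choose (i+1))
        + (if j+1 ≤ m then 2*(2*(m:ℚ)-2*(j:ℚ)-1) * bmc m (j+1) * ((j+1).choose (i+1)) else 0) := by
    intro j hj
    simp only [mem_range] at hj
    rcases Nat.lt_or_ge j m with hlt | hge
    · rw [if_pos (by omega), key1 m j (by omega)]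
      ring
    · have hjm : j = m := by omega
      subst hjm
      rw [if_neg (by omega), key_top j]
      ring
  rw [Finset.sum_congr rfl step2, Finset.sum_add_distrib]
  -- handle the second (shifted) sum
  have step3 : ∑ j ∈ range (m+1),
      (if j+1 ≤ m then 2*(2*(m:ℚ)-2*(j:ℚ)-1) * bmc m (j+1) * ((j+1).choose (i+1)) else 0)
      = ∑ k ∈ range (m+1), 2*(2*(m:ℚ)-2*(k:ℚ)+1) * bmc m k * ((k).choose (i+1)) := by
    rw [Finset.sum_range_succ, if_neg (by omega), add_zero]
    rw [Finset.sum_range_succ' (fun k => 2*(2*(m:ℚ)-2*(k:ℚ)+1) * bmc m k * ((k).choose (i+1))) m]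
    simp only [Nat.choose_zero_succ, Nat.cast_zero, mul_zero, add_zero]
    refine Finset.sum_congr rfl (fun j hj => ?_)
    simp only [mem_range] at hj
    rw [if_pos (by omega)]
    push_cast
    ring
  rw [step3]
  -- now expand per-term with Pascal and key2
  have step4 : ∀ j ∈ range (m+1),
      4*((m:ℚ)+(j:ℚ)+1) * bmc m j * ((j+1).choose (i+1))
        + 2*(2*(m:ℚ)-2*(j:ℚ)+1) * bmc m j * ((j).choose (i+1))
      = 4*((m:ℚ)+(i:ℚ)+1) * (bmc m j * ((j).choose i))
        + 2*(2*(i:ℚ)+4*(m:ℚ)+5) * (bmc m j * ((j).choose (i+1))) := by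
    intro j _
    have pascal : (((j+1).choose (i+1) : ℕ) : ℚ) = (j.choose i) + (j.choose (i+1)) := by
      rw [Nat.choose_succ_succ]
      push_cast
      ring
    have k2 := key2 j i
    rw [pascal]
    nlinarith [k2, bmc_pos m j]
  rw [← Finset.sum_add_distrib, Finset.sum_congr rfl step4, Finset.sum_add_distrib]
  rw [bmD, bmD, Finset.mul_sum, Finset.mul_sum]

lemma recD0 (m : ℕ) :
    ((m:ℚ)+1) * bmD (m+1) 0 = 2*(4*(m:ℚ)+3) * bmD m 0 := by
  have step1 : ((m:ℚ)+1) * bmD (m+1) 0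
      = ∑ k ∈ range (m+2), ((m:ℚ)+1) * bmc (m+1) k * ((k).choose 0) := by
    rw [bmD, Finset.mul_sum]
    exact Finset.sum_congr rfl (fun k _ => by ring)
  rw [step1]
  simp only [Nat.choose_zero_right, Nat.cast_one, mul_one]
  rw [Finset.sum_range_succ']
  have step2 : ∀ j ∈ range (m+1),
      ((m:ℚ)+1) * bmc (m+1) (j+1)
      = 4*((m:ℚ)+(j:ℚ)+1) * bmc m j
        + (if j+1 ≤ m then 2*(2*(m:ℚ)-2*(j:ℚ)-1) * bmc m (j+1) else 0) := by
    intro j hj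
    simp only [mem_range] at hj
    rcases Nat.lt_or_ge j m with hlt | hge
    · rw [if_pos (by omega), key1 m j (by omega)]
    · have hjm : j = m := by omega
      subst hjm
      rw [if_neg (by omega), key_top j]
      ring
  rw [Finset.sum_congr rfl step2, Finset.sum_add_distrib]
  have step3 : ∑ j ∈ range (m+1),
      (if j+1 ≤ m then 2*(2*(m:ℚ)-2*(j:ℚ)-1) * bmc m (j+1) else 0)
      = (∑ k ∈ range (m+1), 2*(2*(m:ℚ)-2*(k:ℚ)+1) * bmc m k) - 2*(2*(m:ℚ)+1) * bmc m 0 := by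
    rw [Finset.sum_range_succ, if_neg (by omega), add_zero]
    rw [Finset.sum_range_succ' (fun k => 2*(2*(m:ℚ)-2*(k:ℚ)+1) * bmc m k) m]
    have : ∑ j ∈ range m,
        (if j+1 ≤ m then 2*(2*(m:ℚ)-2*(j:ℚ)-1) * bmc m (j+1) else 0)
        = ∑ j ∈ range m, 2*(2*(m:ℚ)-2*((j:ℚ)+1)+1) * bmc m (j+1) := by
      refine Finset.sum_congr rfl (fun j hj => ?_)
      simp only [mem_range] at hj
      rw [if_pos (by omega)]
      push_cast
      ring
    rw [this]
    push_cast
    ring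
  rw [step3, key_zero m]
  have step4 : ∀ j ∈ range (m+1),
      4*((m:ℚ)+(j:ℚ)+1) * bmc m j + 2*(2*(m:ℚ)-2*(j:ℚ)+1) * bmc m j
      = 2*(4*(m:ℚ)+3) * (bmc m j * ((j).choose 0)) := by
    intro j _
    simp only [Nat.choose_zero_right, Nat.cast_one, mul_one]
    ring
  have combine : ∑ j ∈ range (m+1), 4*((m:ℚ)+(j:ℚ)+1) * bmc m j
      + ∑ k ∈ range (m+1), 2*(2*(m:ℚ)-2*(k:ℚ)+1) * bmc m k
      = 2*(4*(m:ℚ)+3) * bmD m 0 := by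
    rw [← Finset.sum_add_distrib, Finset.sum_congr rfl step4, bmD, Finset.mul_sum]
  linarith [combine]

lemma q_pos (m : ℕ) : (0:ℚ) < (2:ℚ) ^ (-(2 * (m:ℤ))) := by positivity

lemma q_succ (m : ℕ) :
    (2:ℚ) ^ (-(2 * ((m+1:ℕ):ℤ))) = (2:ℚ) ^ (-(2 * (m:ℤ))) / 4 := by
  push_cast
  rw [show -(2*((m:ℤ)+1)) = -(2*(m:ℤ)) + (-2) from by ring, zpow_add₀ (by norm_num : (2:ℚ) ≠ 0)]
  norm_num
  ring

lemma bmd_pos (i m : ℕ) (h : i ≤ m) : 0 < bmd (i:ℤ) m := by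
  rw [bmd_eq_s9]
  exact mul_pos (q_pos m) (bmD_pos m i h)

lemma bmd_nonneg (i m : ℕ) : 0 ≤ bmd (i:ℤ) m := by
  rw [bmd_eq_s9]
  exact mul_nonneg (q_pos m).le (bmD_nonneg m i)

lemma bmd_eq_zero (i m : ℕ) (h : m < i) : bmd (i:ℤ) m = 0 := by
  rw [bmd_eq_s9, bmD_eq_zero m i h, mul_zero]

lemma recS (m i : ℕ) :
    2*((m:ℚ)+1) * bmd (↑(i+1)) (m+1)
      = 2*((m:ℚ)+(i:ℚ)+1) * bmd (↑i) m + (2*(i:ℚ)+4*(m:ℚ)+5) * bmd (↑(i+1)) m := by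
  rw [bmd_eq_s9, bmd_eq_s9, bmd_eq_s9, q_succ]
  have h := recD m i
  set q := (2:ℚ) ^ (-(2 * (m:ℤ)))
  linear_combination (q/2) * h

lemma rec0 (m : ℕ) :
    2*((m:ℚ)+1) * bmd (0:ℤ) (m+1) = (4*(m:ℚ)+3) * bmd (0:ℤ) m := by
  have e0 : (0:ℤ) = ((0:ℕ):ℤ) := rfl
  rw [e0, bmd_eq_s9, bmd_eq_s9, q_succ]
  have h := recD0 m
  set q := (2:ℚ) ^ (-(2 * (m:ℤ)))
  linear_combination (q/2) * h

lemma aux_le {c x y z : ℚ} (hc : 0 < c) (h : c * (y - x) = z) (hz : 0 ≤ z) : x ≤ y := by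
  nlinarith

lemma bmd_val_01 : bmd (0:ℤ) 1 = 3/2 := by
  rw [show (0:ℤ) = ((0:ℕ):ℤ) from rfl, bmd_eq_s9]
  have h1 : bmD 1 0 = 6 := by
    norm_num [bmD, bmc, Finset.sum_range_succ]
  rw [h1]
  norm_num

lemma bmd_val_11 : bmd (1:ℤ) 1 = 1 := by
  rw [show (1:ℤ) = ((1:ℕ):ℤ) from rfl, bmd_eq_s9]
  have h1 : bmD 1 1 = 4 := by
    norm_num [bmD, bmc, Finset.sum_range_succ]
  rw [h1]
  norm_num

set_option maxHeartbeats 2000000 in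
lemma bmd_bounds (m : ℕ) : ∀ i : ℕ, i + 1 ≤ m →
    2*((m:ℚ)-(i:ℚ)) * bmd (↑i) m ≤ (2*(i:ℚ)+3) * bmd (↑(i+1)) m ∧
    ((i:ℚ)+1) * bmd (↑(i+1)) m ≤ ((m:ℚ)-(i:ℚ)) * bmd (↑i) m := by
  induction m with
  | zero => intro i hi; omega
  | succ m IH =>
    intro i hi
    rcases Nat.eq_zero_or_pos m with rfl | hm
    · -- level 1 : i = 0
      have hi0 : i = 0 := by omega
      subst hi0
      norm_num [bmd_val_01, bmd_val_11]
    · have hmQ : (1:ℚ) ≤ (m:ℚ) := by exact_mod_cast hm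
      have hcpos : (0:ℚ) < 2*((m:ℚ)+1) := by linarith
      rcases Nat.lt_or_ge (i+1) (m+1) with hmid | htop
      · -- i + 1 ≤ m
        have him : i + 1 ≤ m := by omega
        rcases Nat.eq_zero_or_pos i with rfl | hipos
        · -- i = 0 case
          have r0 := rec0 m
          have r1 := recS m 0
          obtain ⟨ih1, ih2⟩ := IH 0 (by omega)
          have d0 := bmd_nonneg 0 m
          have d1 := bmd_nonneg (0+1) m
          push_cast at r0 r1 ih1 ih2 d0 d1 ⊢
          constructor
          · refine aux_le hcpos (z := 3*(2*((m:ℚ)+1) * bmd 0 m + (4*(m:ℚ)+5)*bmd 1 m)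
              - 2*((m:ℚ)+1)*((4*(m:ℚ)+3) * bmd 0 m)) ?_ ?_
            · linear_combination 3*r1 - (2*((m:ℚ)+1))*r0
            · have h5 : (4*(m:ℚ)+5) * (2*(m:ℚ)*bmd 0 m) ≤ (4*(m:ℚ)+5) * (3*bmd 1 m) := by
                apply mul_le_mul_of_nonneg_left _ (by positivity)
                linarith [ih1]
              have h6 : (0:ℚ) ≤ (m:ℚ)*bmd 0 m := by positivity
              nlinarith [h5, h6]
          · refine aux_le hcpos (z := ((m:ℚ)+1)*((4*(m:ℚ)+3) * bmd 0 m)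
              - (2*((m:ℚ)+1) * bmd 0 m + (4*(m:ℚ)+5)*bmd 1 m)) ?_ ?_
            · linear_combination ((m:ℚ)+1)*r0 - r1
            · have h5 : (4*(m:ℚ)+5) * bmd 1 m ≤ (4*(m:ℚ)+5) * ((m:ℚ)*bmd 0 m) := by
                apply mul_le_mul_of_nonneg_left _ (by positivity)
                linarith [ih2]
              nlinarith [h5, d0]
        · -- 1 ≤ i, i+1 ≤ m : middle case
          obtain ⟨j, rfl⟩ : ∃ j, i = j + 1 := ⟨i - 1, by omega⟩
          have rI := recS m (j+1)
          have rJ := recS m j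
          obtain ⟨ihL1, ihU1⟩ := IH (j+1) (by omega)
          obtain ⟨ihL0, ihU0⟩ := IH j (by omega)
          have dj := bmd_nonneg j m
          have di := bmd_nonneg (j+1) m
          have di1 := bmd_nonneg (j+1+1) m
          have hjm : (j:ℚ) + 2 ≤ (m:ℚ) := by exact_mod_cast him
          push_cast at rI rJ ihL1 ihU1 ihL0 ihU0 dj di di1 ⊢
          constructor
          · refine aux_le hcpos
              (z := (2*(j:ℚ)+5)*(2*((m:ℚ)+(j:ℚ)+2) * bmd ((j:ℤ)+1) m + (2*(j:ℚ)+4*(m:ℚ)+7) * bmd ((j:ℤ)+1+1) m)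
                - 2*((m:ℚ)-(j:ℚ))*(2*((m:ℚ)+(j:ℚ)+1) * bmd (j:ℤ) m + (2*(j:ℚ)+4*(m:ℚ)+5) * bmd ((j:ℤ)+1) m)) ?_ ?_
            · linear_combination (2*(j:ℚ)+5)*rI - (2*((m:ℚ)-(j:ℚ)))*rJ
            · have h5 : (2*((m:ℚ)+(j:ℚ)+1)) * (2*((m:ℚ)-(j:ℚ))*bmd (j:ℤ) m)
                  ≤ (2*((m:ℚ)+(j:ℚ)+1)) * ((2*(j:ℚ)+3)*bmd ((j:ℤ)+1) m) := by
                apply mul_le_mul_of_nonneg_left _ (by positivity)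
                linarith [ihL0]
              have h6 : (2*(j:ℚ)+4*(m:ℚ)+7) * (2*((m:ℚ)-(j:ℚ)-1)*bmd ((j:ℤ)+1) m)
                  ≤ (2*(j:ℚ)+4*(m:ℚ)+7) * ((2*(j:ℚ)+5)*bmd ((j:ℤ)+1+1) m) := by
                apply mul_le_mul_of_nonneg_left _ (by positivity)
                linarith [ihL1]
              nlinarith [h5, h6]
          · refine aux_le hcpos
              (z := ((m:ℚ)-(j:ℚ))*(2*((m:ℚ)+(j:ℚ)+1) * bmd (j:ℤ) m + (2*(j:ℚ)+4*(m:ℚ)+5) * bmd ((j:ℤ)+1) m)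
                - ((j:ℚ)+2)*(2*((m:ℚ)+(j:ℚ)+2) * bmd ((j:ℤ)+1) m + (2*(j:ℚ)+4*(m:ℚ)+7) * bmd ((j:ℤ)+1+1) m)) ?_ ?_
            · linear_combination ((m:ℚ)-(j:ℚ))*rJ - ((j:ℚ)+2)*rI
            · have h5 : (2*(j:ℚ)+4*(m:ℚ)+7) * (((j:ℚ)+2)*bmd ((j:ℤ)+1+1) m)
                  ≤ (2*(j:ℚ)+4*(m:ℚ)+7) * (((m:ℚ)-(j:ℚ)-1)*bmd ((j:ℤ)+1) m) := by
                apply mul_le_mul_of_nonneg_left _ (by positivity)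
                linarith [ihU1]
              have h6 : (2*((m:ℚ)+(j:ℚ)+1)) * (((j:ℚ)+1)*bmd ((j:ℤ)+1) m)
                  ≤ (2*((m:ℚ)+(j:ℚ)+1)) * (((m:ℚ)-(j:ℚ))*bmd (j:ℤ) m) := by
                apply mul_le_mul_of_nonneg_left _ (by positivity)
                linarith [ihU0]
              nlinarith [h5, h6, di]
      · -- top case : i = m
        obtain ⟨j, rfl⟩ : ∃ j, m = j + 1 := ⟨m - 1, by omega⟩
        obtain rfl : i = j + 1 := by omega
        have rT := recS (j+1) (j+1)
        have rM := recS (j+1) j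
        have hz := bmd_eq_zero (j+1+1) (j+1) (by omega)
        obtain ⟨ihL0, ihU0⟩ := IH j (by omega)
        have dj := bmd_nonneg j (j+1)
        have dm := bmd_nonneg (j+1) (j+1)
        push_cast at rT rM hz ihL0 ihU0 dj dm ⊢
        rw [hz] at rT
        have hcpos2 : (0:ℚ) < 2*((j:ℚ)+1+1) := by positivity
        constructor
        · refine aux_le hcpos2
            (z := (2*(j:ℚ)+5)*(2*(2*(j:ℚ)+3) * bmd ((j:ℤ)+1) (j+1))
              - 2*(2*(2*(j:ℚ)+2) * bmd (j:ℤ) (j+1) + (6*(j:ℚ)+9) * bmd ((j:ℤ)+1) (j+1))) ?_ ?_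
          · linear_combination (2*(j:ℚ)+5)*rT - 2*rM
          · have h5 : (4*(j:ℚ)+4) * (2*bmd (j:ℤ) (j+1))
                ≤ (4*(j:ℚ)+4) * ((2*(j:ℚ)+3)*bmd ((j:ℤ)+1) (j+1)) := by
              apply mul_le_mul_of_nonneg_left _ (by positivity)
              linarith [ihL0]
            nlinarith [h5, dm]
        · refine aux_le hcpos2
            (z := (2*(2*(j:ℚ)+2) * bmd (j:ℤ) (j+1) + (6*(j:ℚ)+9) * bmd ((j:ℤ)+1) (j+1))
              - ((j:ℚ)+2)*(2*(2*(j:ℚ)+3) * bmd ((j:ℤ)+1) (j+1))) ?_ ?_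
          · linear_combination rM - ((j:ℚ)+2)*rT
          · have h5 : (4*(j:ℚ)+4) * (((j:ℚ)+1)*bmd ((j:ℤ)+1) (j+1))
                ≤ (4*(j:ℚ)+4) * bmd (j:ℤ) (j+1) := by
              apply mul_le_mul_of_nonneg_left _ (by positivity)
              linarith [ihU0]
            nlinarith [h5, dm]

lemma aux_lt {c x y z : ℚ} (hc : 0 < c) (h : c * (y - x) = z) (hz : 0 < z) : x < y := by
  nlinarith

set_option maxHeartbeats 2000000 in
theorem bmd_strong_interlacing (m : ℕ) (hm : 2 ≤ m) (i : ℕ) (hi : i ≤ m - 1) :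
    (2 * (i : ℚ) + 4 * (m : ℚ) + 3) * bmd i m * bmd (i + 1) (m + 1) >
      (2 * (i : ℚ) + 4 * (m : ℚ) + 5) * bmd i (m + 1) * bmd (i + 1) m := by
  have him : i + 1 ≤ m := by omega
  have hmQ : (2:ℚ) ≤ (m:ℚ) := by exact_mod_cast hm
  have hcpos : (0:ℚ) < 2*((m:ℚ)+1) := by linarith
  have rI := recS m i
  have hd0 := bmd_pos i m (by omega)
  rcases Nat.eq_zero_or_pos i with rfl | hipos
  · -- i = 0
    have r0 := rec0 m
    push_cast at rI r0 hd0 ⊢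
    refine aux_lt hcpos
      (z := 2*(4*(m:ℚ)+3)*((m:ℚ)+1)*(bmd 0 m)^2) ?_ ?_
    · linear_combination ((4*(m:ℚ)+3)*bmd 0 m) * rI - ((4*(m:ℚ)+5)*bmd 1 m) * r0
    · positivity
  · obtain ⟨j, rfl⟩ : ∃ j, i = j + 1 := ⟨i - 1, by omega⟩
    have rJ := recS m j
    obtain ⟨ihL, _⟩ := bmd_bounds m j (by omega)
    obtain ⟨_, ihU⟩ := bmd_bounds m (j+1) (by omega)
    have ha := bmd_nonneg j m
    have hb := bmd_pos (j+1) m (by omega)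
    have he := bmd_nonneg (j+1+1) m
    have hjm : (j:ℚ) + 2 ≤ (m:ℚ) := by exact_mod_cast him
    push_cast at rI rJ ihL ihU ha hb he hd0 ⊢
    set J := (j:ℚ) with hJ
    set M := (m:ℚ) with hM
    set a := bmd (j:ℤ) m with hA
    set b := bmd ((j:ℤ)+1) m with hB
    set e := bmd ((j:ℤ)+1+1) m with hE
    -- key products
    have h7 : (2*(M-J)*a) * ((J+2)*e) ≤ ((2*J+3)*b) * ((M-J-1)*b) := by
      apply mul_le_mul (by linarith [ihL]) (by linarith [ihU]) (by positivity) (by positivity)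
    have hb2 : (0:ℚ) < b^2 := by positivity
    have hR : (0:ℚ) < 4*(2*J+4*M+5)*(M+J+2)*(M-J)*(J+2)
        - 2*(2*J+4*M+7)*(M+J+1)*(2*J+3)*(M-J-1) := by
      have hu : (0:ℚ) ≤ M - J - 2 := by linarith
      have hj0 : (0:ℚ) ≤ J := by positivity
      nlinarith [mul_nonneg hu hj0, mul_nonneg (mul_nonneg hu hj0) hj0,
        mul_nonneg (mul_nonneg hu hu) hj0, mul_nonneg hu hu,
        mul_nonneg (mul_nonneg hu hu) hu, mul_nonneg (mul_nonneg hj0 hj0) hj0,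
        mul_nonneg hj0 hj0]
    have e1 : 2*(2*J+4*M+7)*(M+J+1) * ((2*(M-J)*a) * ((J+2)*e))
        ≤ 2*(2*J+4*M+7)*(M+J+1) * (((2*J+3)*b) * ((M-J-1)*b)) := by
      apply mul_le_mul_of_nonneg_left h7 (by positivity)
    have hcoef : (0:ℚ) < 2*(M-J)*(J+2) := by nlinarith
    refine aux_lt hcpos
      (z := 2*(2*J+4*M+5)*(M+J+2)*b^2 - 2*(2*J+4*M+7)*(M+J+1)*(a*e)) ?_ ?_
    · linear_combination ((2*J+4*M+5)*b) * rI - ((2*J+4*M+7)*e) * rJ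
    · have hz2 : 0 < (2*(M-J)*(J+2)) *
          (2*(2*J+4*M+5)*(M+J+2)*b^2 - 2*(2*J+4*M+7)*(M+J+1)*(a*e)) := by
        nlinarith [e1, mul_pos hR hb2]
      nlinarith [hz2, hcoef]
end

section
/- For all integers m ≥ 2 and 0 ≤ i ≤ m−1, the Boros-Moll coefficients satisfy d_i(m) · d_{i+1}(m+1) > d_{i+1}(m) · d_i(m+1). -/
/-- Unnormalized Boros-Moll sum over a uniform range. -/
def Dq (i m : ℕ) : ℚ :=
  ∑ k ∈ Finset.range (m+1),
    (2 : ℚ) ^ k * (Nat.choose (2 * m - 2 * k) (m - k)) *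
      (Nat.choose (m + k) k) * (Nat.choose k i)

lemma chooseR (n r : ℕ) :
    ((r:ℚ) + 1) * (n.choose (r+1) : ℚ) = ((n:ℚ) - (r:ℚ)) * (n.choose r : ℚ) := by
  rcases le_or_gt (r+1) n with h | h
  · have h0 : (n.choose (r+1) * (r+1)) = n.choose r * (n - r) := Nat.choose_succ_right_eq n r
    have h1 := congrArg (Nat.cast (R := ℚ)) h0
    push_cast [Nat.cast_sub (show r ≤ n by omega)] at h1
    linarith
  · have h1 : n.choose (r+1) = 0 := Nat.choose_eq_zero_of_lt h
    rcases lt_or_eq_of_le (Nat.lt_succ_iff.mp h) with h2 | h2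
    · rw [h1, Nat.choose_eq_zero_of_lt h2]; simp
    · subst h2; rw [h1]; simp

lemma chooseL (n r : ℕ) :
    ((n:ℚ) + 1 - (r:ℚ)) * ((n+1).choose r : ℚ) = ((n:ℚ) + 1) * (n.choose r : ℚ) := by
  rcases le_or_gt r (n+1) with h | h
  · have h0 : n.choose r * (n+1) = (n+1).choose r * (n+1-r) := Nat.choose_mul_succ_eq n r
    have h1 := congrArg (Nat.cast (R := ℚ)) h0
    push_cast [Nat.cast_sub h] at h1
    linarith
  · rw [Nat.choose_eq_zero_of_lt h, Nat.choose_eq_zero_of_lt (by omega)]; simp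

lemma chooseS (n k : ℕ) :
    ((k:ℚ) + 1) * ((n+1).choose (k+1) : ℚ) = ((n:ℚ) + 1) * (n.choose k : ℚ) := by
  have h0 : (n+1) * n.choose k = (n+1).choose (k+1) * (k+1) := Nat.add_one_mul_choose_eq n k
  have h1 := congrArg (Nat.cast (R := ℚ)) h0
  push_cast at h1
  linarith

lemma centralN (a : ℕ) :
    (a+1)^2 * ((2*a+2).choose (a+1)) = (2*a+2) * (2*a+1) * ((2*a).choose a) := by
  have h1 : (2*a+2) * (2*a+1).choose a = (2*a+2).choose (a+1) * (a+1) := by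
    simpa using Nat.add_one_mul_choose_eq (2*a+1) a
  have h2 : (2*a+1) * (2*a).choose a = (2*a+1).choose (a+1) * (a+1) := by
    simpa using Nat.add_one_mul_choose_eq (2*a) a
  have h3 : (2*a+1).choose a = (2*a+1).choose (a+1) := by
    have := Nat.choose_symm (show a+1 ≤ 2*a+1 by omega)
    simpa [show 2*a+1 - (a+1) = a from by omega] using this
  calc (a+1)^2 * ((2*a+2).choose (a+1))
      = ((2*a+2).choose (a+1) * (a+1)) * (a+1) := by ring
    _ = ((2*a+2) * (2*a+1).choose a) * (a+1) := by rw [h1]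
    _ = ((2*a+1).choose (a+1) * (a+1)) * (2*a+2) := by rw [h3]; ring
    _ = ((2*a+1) * (2*a).choose a) * (2*a+2) := by rw [h2]
    _ = (2*a+2) * (2*a+1) * ((2*a).choose a) := by ring

lemma centralQ (a : ℕ) :
    ((a:ℚ)+1)^2 * ((2*a+2).choose (a+1) : ℚ)
      = (2*(a:ℚ)+2) * (2*(a:ℚ)+1) * ((2*a).choose a : ℚ) := by
  have h1 := congrArg (Nat.cast (R := ℚ)) (centralN a)
  push_cast at h1
  linear_combination h1

lemma bmd_natCast (i m : ℕ) : bmd (i : ℤ) m = ((2:ℚ)^(2*m))⁻¹ * Dq i m := by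
  rw [bmd, if_pos (Int.natCast_nonneg i)]
  rw [show -(2 * (m:ℤ)) = -((2*m : ℕ) : ℤ) by push_cast; ring, zpow_neg, zpow_natCast]
  congr 1
  rw [Dq]
  simp only [Int.toNat_natCast]
  refine Finset.sum_subset ?_ ?_
  · intro k hk
    simp only [Finset.mem_Icc] at hk
    simp only [Finset.mem_range]; omega
  · intro k hk hnk
    simp only [Finset.mem_range] at hk
    simp only [Finset.mem_Icc] at hnk
    have : k < i := by omega
    simp [Nat.choose_eq_zero_of_lt this]

lemma Dq_nonneg (i m : ℕ) : 0 ≤ Dq i m := by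
  apply Finset.sum_nonneg
  intro k _
  positivity

lemma Dq_pos {i m : ℕ} (h : i ≤ m) : 0 < Dq i m := by
  have hmem : m ∈ Finset.range (m+1) := by simp
  have hterm : (0:ℚ) < (2 : ℚ) ^ m * (Nat.choose (2 * m - 2 * m) (m - m)) *
      (Nat.choose (m + m) m) * (Nat.choose m i) := by
    have h1 : (2*m - 2*m) = 0 := by omega
    have h2 : (m - m) = 0 := by omega
    rw [h1, h2]
    simp only [Nat.choose_self, Nat.cast_one]
    have c1 : 0 < Nat.choose (m+m) m := Nat.choose_pos (by omega)
    have c2 : 0 < Nat.choose m i := Nat.choose_pos h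
    positivity
  have := Finset.single_le_sum (f := fun k => (2 : ℚ) ^ k * (Nat.choose (2 * m - 2 * k) (m - k)) *
      (Nat.choose (m + k) k) * (Nat.choose k i)) (fun k _ => by positivity) hmem
  calc (0:ℚ) < _ := hterm
    _ ≤ Dq i m := this

lemma Dq_zero {i m : ℕ} (h : m < i) : Dq i m = 0 := by
  apply Finset.sum_eq_zero
  intro k hk
  simp only [Finset.mem_range] at hk
  simp [Nat.choose_eq_zero_of_lt (show k < i by omega)]

def T (m j k : ℕ) : ℚ :=
  (2 : ℚ) ^ k * (Nat.choose (2 * m - 2 * k) (m - k)) *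
      (Nat.choose (m + k) k) * (Nat.choose k j)

lemma Dq_T (j m : ℕ) : Dq j m = ∑ k ∈ Finset.range (m+1), T m j k := rfl

-- the in-i three-term recurrence
lemma rec2 (m i : ℕ) (h : i + 1 ≤ m) :
    ((m:ℚ) - i) * ((m:ℚ) + i + 1) * Dq i m
      = ((i:ℚ)+1) * (2*(m:ℚ)+1) * Dq (i+1) m - ((i:ℚ)+1) * ((i:ℚ)+2) * Dq (i+2) m := by
  have key : ∀ k, k < m →
      ((m:ℚ) - i) * ((m:ℚ) + i + 1) * T m i k
        - ((i:ℚ)+1) * (2*(m:ℚ)+1) * T m (i+1) k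
        + ((i:ℚ)+1) * ((i:ℚ)+2) * T m (i+2) k
      = (((k+1 : ℕ):ℚ) - i) * (2*(m:ℚ)+1-2*((k+1 : ℕ):ℚ)) * T m i (k+1)
        - ((k:ℚ) - i) * (2*(m:ℚ)+1-2*(k:ℚ)) * T m i k := by
    intro k hk
    rcases Nat.lt_or_ge k i with hki | hki
    · -- k < i : everything vanishes
      rcases Nat.lt_or_ge (k+1) i with hk1 | hk1
      · simp only [T, Nat.choose_eq_zero_of_lt hki, Nat.choose_eq_zero_of_lt hk1,
          Nat.choose_eq_zero_of_lt (show k < i+1 by omega),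
          Nat.choose_eq_zero_of_lt (show k < i+2 by omega)]
        push_cast; ring
      · -- k+1 = i
        have hik : i = k+1 := by omega
        subst hik
        simp only [T, Nat.choose_eq_zero_of_lt (show k < k+1 by omega),
          Nat.choose_eq_zero_of_lt (show k < k+1+1 by omega),
          Nat.choose_eq_zero_of_lt (show k < k+1+2 by omega)]
        push_cast; ring
    · -- i ≤ k, main case
      obtain ⟨a, rfl⟩ : ∃ a, m = k+1+a := ⟨m-(k+1), by omega⟩
      have n1 : 2*(k+1+a) - 2*k = 2*a+2 := by omega
      have n2 : (k+1+a) - k = a+1 := by omega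
      have n3 : 2*(k+1+a) - 2*(k+1) = 2*a := by omega
      have n4 : (k+1+a) - (k+1) = a := by omega
      have n5 : k+1+a+(k+1) = (k+1+a+k)+1 := by omega
      simp only [T, n1, n2, n3, n4, n5]
      -- atoms
      have e1 : ((i:ℚ)+1) * (k.choose (i+1) : ℚ) = ((k:ℚ) - i) * (k.choose i : ℚ) := chooseR k i
      have e2 : ((i:ℚ)+2) * (k.choose (i+2) : ℚ) = ((k:ℚ) - i - 1) * (k.choose (i+1) : ℚ) := by
        have := chooseR k (i+1); push_cast at this; linear_combination this
      have e3 : ((k:ℚ)+1-(i:ℚ)) * ((k+1).choose i : ℚ) = ((k:ℚ)+1) * (k.choose i : ℚ) := chooseL k i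
      have e4 := centralQ a
      have e5 : ((k:ℚ)+1) * (((k+1+a+k)+1).choose (k+1) : ℚ)
          = ((k+1+a+k:ℚ)+1) * ((k+1+a+k).choose k : ℚ) := by
        have h0 : (k+1+a+k+1) * (k+1+a+k).choose k = ((k+1+a+k)+1).choose (k+1) * (k+1) :=
          Nat.add_one_mul_choose_eq (k+1+a+k) k
        have h1 := congrArg (Nat.cast (R := ℚ)) h0
        push_cast at h1
        linear_combination -h1
      have hIk : (i:ℚ) ≤ (k:ℚ) := by exact_mod_cast hki
      have d1 : ((i:ℚ)+1) ≠ 0 := by positivity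
      have d2 : ((i:ℚ)+2) ≠ 0 := by positivity
      have d3 : ((k:ℚ)+1-(i:ℚ)) ≠ 0 := by intro hc; nlinarith
      have d4 : ((a:ℚ)+1) ≠ 0 := by positivity
      have d5 : (2*(a:ℚ)+2) ≠ 0 := by positivity
      have d6 : (2*(a:ℚ)+1) ≠ 0 := by positivity
      have d7 : ((k:ℚ)+1) ≠ 0 := by positivity
      have s1 : (k.choose (i+1) : ℚ) = ((k:ℚ) - i) * (k.choose i : ℚ) / ((i:ℚ)+1) := by
        field_simp; linear_combination e1
      have s2 : (k.choose (i+2) : ℚ) = ((k:ℚ) - i - 1) * (k.choose (i+1) : ℚ) / ((i:ℚ)+2) := by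
        field_simp; linear_combination e2
      have s3 : ((k+1).choose i : ℚ) = ((k:ℚ)+1) * (k.choose i : ℚ) / ((k:ℚ)+1-(i:ℚ)) := by
        field_simp; linear_combination e3
      have s4 : ((2*a).choose a : ℚ)
          = ((a:ℚ)+1)^2 * ((2*a+2).choose (a+1) : ℚ) / ((2*(a:ℚ)+2) * (2*(a:ℚ)+1)) := by
        rw [eq_div_iff (by positivity)]; linear_combination -e4
      have s5 : (((k+1+a+k)+1).choose (k+1) : ℚ)
          = ((k+1+a+k:ℚ)+1) * ((k+1+a+k).choose k : ℚ) / ((k:ℚ)+1) := by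
        field_simp; linear_combination e5
      rw [s2, s1, s3, s4, s5]
      push_cast
      field_simp
      ring
  -- assemble
  have hsum : ((m:ℚ) - i) * ((m:ℚ) + i + 1) * Dq i m
      - ((i:ℚ)+1) * (2*(m:ℚ)+1) * Dq (i+1) m + ((i:ℚ)+1) * ((i:ℚ)+2) * Dq (i+2) m
      = ∑ k ∈ Finset.range (m+1),
          (((m:ℚ) - i) * ((m:ℚ) + i + 1) * T m i k
            - ((i:ℚ)+1) * (2*(m:ℚ)+1) * T m (i+1) k
            + ((i:ℚ)+1) * ((i:ℚ)+2) * T m (i+2) k) := by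
    simp only [Dq_T, Finset.mul_sum, ← Finset.sum_sub_distrib, ← Finset.sum_add_distrib]
  have main : ∑ k ∈ Finset.range (m+1),
      (((m:ℚ) - i) * ((m:ℚ) + i + 1) * T m i k
        - ((i:ℚ)+1) * (2*(m:ℚ)+1) * T m (i+1) k
        + ((i:ℚ)+1) * ((i:ℚ)+2) * T m (i+2) k) = 0 := by
    rw [Finset.sum_range_succ]
    rw [Finset.sum_congr rfl (fun k hk => key k (Finset.mem_range.mp hk))]
    rw [Finset.sum_range_sub (fun k => ((k:ℚ) - i) * (2*(m:ℚ)+1-2*(k:ℚ)) * T m i k) m]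
    have hg0 : ((0:ℚ) - i) * (2*(m:ℚ)+1-2*(0:ℚ)) * T m i 0 = 0 := by
      rcases i with _ | j
      · norm_num
      · simp [T, Nat.choose_eq_zero_of_lt (Nat.succ_pos j)]
    have harg1 : 2*m - 2*m = 0 := by omega
    have harg2 : m - m = 0 := by omega
    have e1m : ((i:ℚ)+1) * (m.choose (i+1) : ℚ) = ((m:ℚ) - i) * (m.choose i : ℚ) := chooseR m i
    have e2m : ((i:ℚ)+2) * (m.choose (i+2) : ℚ) = ((m:ℚ) - i - 1) * (m.choose (i+1) : ℚ) := by
      have := chooseR m (i+1); push_cast at this; linear_combination this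
    have hlast : ((m:ℚ) - i) * ((m:ℚ) + i + 1) * T m i m
        - ((i:ℚ)+1) * (2*(m:ℚ)+1) * T m (i+1) m + ((i:ℚ)+1) * ((i:ℚ)+2) * T m (i+2) m
        + ((m:ℚ) - i) * (2*(m:ℚ)+1-2*(m:ℚ)) * T m i m = 0 := by
      simp only [T, harg1, harg2, Nat.choose_self, Nat.cast_one]
      linear_combination ((-(m:ℚ) - i - 2) * ((2:ℚ)^m * (((m+m).choose m : ℕ) : ℚ) * 1)) * e1m
        + (((i:ℚ)+1) * ((2:ℚ)^m * (((m+m).choose m : ℕ) : ℚ) * 1)) * e2m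
    push_cast at hg0 hlast ⊢
    linear_combination hlast - hg0
  linarith [hsum, main]

/-- auxiliary telescoping certificate for the recurrence in `m` -/
def Haux (m j : ℕ) : ℕ → ℚ
  | 0 => 0
  | (k+1) => 4*((m:ℚ)+1) * ((2:ℚ)^(k+1) * ((2*m - 2*k).choose (m-k) : ℚ) *
      ((m+k+1).choose k : ℚ) * ((k+1).choose j : ℚ))

lemma Haux_zero (m j : ℕ) : Haux m j 0 = 0 := rfl
lemma Haux_succ (m j k : ℕ) : Haux m j (k+1) = 4*((m:ℚ)+1) * ((2:ℚ)^(k+1) *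
    ((2*m - 2*k).choose (m-k) : ℚ) * ((m+k+1).choose k : ℚ) * ((k+1).choose j : ℚ)) := rfl

lemma chooseBig (m : ℕ) : ((2*m+2).choose (m+1) : ℚ) = 2 * ((2*m+1).choose m : ℚ) := by
  have h0 : (2*m+2) * (2*m+1).choose m = (2*m+2).choose (m+1) * (m+1) := by
    simpa using Nat.add_one_mul_choose_eq (2*m+1) m
  have h1 := congrArg (Nat.cast (R := ℚ)) h0
  push_cast at h1
  apply mul_left_cancel₀ (show ((m:ℚ)+1) ≠ 0 by positivity)
  linear_combination -h1

set_option maxHeartbeats 1600000 in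
lemma rec1s (m i : ℕ) :
    2*((m:ℚ)+1) * Dq (i+1) (m+1)
      = 8*((m:ℚ)+(i:ℚ)+1) * Dq i m + 4*(4*(m:ℚ)+2*(i:ℚ)+5) * Dq (i+1) m := by
  have key : ∀ k, k < m+1 →
      2*((m:ℚ)+1) * T (m+1) (i+1) k
        = 8*((m:ℚ)+(i:ℚ)+1) * T m i k + 4*(4*(m:ℚ)+2*(i:ℚ)+5) * T m (i+1) k
          + (Haux m (i+1) k - Haux m (i+1) (k+1)) := by
    intro k hk
    rcases Nat.lt_trichotomy k i with hki | hki | hki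
    · -- k < i : everything vanishes
      rcases k with _ | k'
      · simp only [T, Haux_zero, Haux_succ,
          Nat.choose_eq_zero_of_lt (show 0 < i by omega),
          Nat.choose_eq_zero_of_lt (show 0 < i+1 by omega),
          Nat.choose_eq_zero_of_lt (show 0+1 < i+1 by omega)]
        push_cast; ring
      · simp only [T, Haux_succ,
          Nat.choose_eq_zero_of_lt (show k'+1 < i by omega),
          Nat.choose_eq_zero_of_lt (show k'+1 < i+1 by omega),
          Nat.choose_eq_zero_of_lt (show k'+1+1 < i+1 by omega)]
        push_cast; ring
    · -- k = i
      subst hki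
      obtain ⟨b, rfl⟩ : ∃ b, m = k + b := ⟨m-k, by omega⟩
      have n1 : 2*(k+b) - 2*k = 2*b := by omega
      have n2 : (k+b) - k = b := by omega
      have n3 : (k+b) + k = 2*k+b := by omega
      have n4 : (k+b) + k + 1 = 2*k+b+1 := by omega
      have hHk : Haux (k+b) (k+1) k = 0 := by
        rcases k with _ | k'
        · exact Haux_zero _ _
        · rw [Haux_succ]
          simp [Nat.choose_eq_zero_of_lt (show k'+1 < k'+1+1 by omega)]
      rw [hHk, Haux_succ]
      simp only [T, n1, n2, n3, n4, Nat.choose_self,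
        Nat.choose_eq_zero_of_lt (show k < k+1 by omega)]
      have h0 : (2*k+b).choose k * (2*k+b+1) = (2*k+b+1).choose k * (k+b+1) := by
        have := Nat.choose_mul_succ_eq (2*k+b) k
        simpa [show 2*k+b+1-k = k+b+1 by omega] using this
      have h1 := congrArg (Nat.cast (R := ℚ)) h0
      push_cast at h1 ⊢
      linear_combination (-8 * (2:ℚ)^k * ((2*b).choose b : ℚ)) * h1
    · -- i < k : main case
      obtain ⟨k', rfl⟩ : ∃ k', k = k'+1 := ⟨k-1, by omega⟩
      obtain ⟨a, rfl⟩ : ∃ a, m = k'+1+a := ⟨m-(k'+1), by omega⟩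
      have n1 : 2*(k'+1+a) - 2*(k'+1) = 2*a := by omega
      have n2 : (k'+1+a) - (k'+1) = a := by omega
      have n3 : (k'+1+a) + (k'+1) = 2*k'+a+2 := by omega
      have n4 : 2*(k'+1+a+1) - 2*(k'+1) = 2*a+2 := by omega
      have n5 : (k'+1+a+1) - (k'+1) = a+1 := by omega
      have n6 : (k'+1+a+1) + (k'+1) = 2*k'+a+3 := by omega
      have n7 : 2*(k'+1+a) - 2*k' = 2*a+2 := by omega
      have n8 : (k'+1+a) - k' = a+1 := by omega
      have n9 : (k'+1+a) + k' + 1 = 2*k'+a+2 := by omega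
      have n10 : (k'+1+a) + (k'+1) + 1 = 2*k'+a+3 := by omega
      rw [Haux_succ, Haux_succ]
      simp only [T, n1, n2, n3, n4, n5, n6, n7, n8, n9, n10]
      -- relations
      have e1 : ((i:ℚ)+1) * ((k'+1).choose (i+1) : ℚ)
          = (((k'+1:ℕ):ℚ) - i) * ((k'+1).choose i : ℚ) := chooseR (k'+1) i
      have e2 : (((k'+1:ℕ):ℚ) + 1 - ((i:ℚ)+1)) * ((k'+1+1).choose (i+1) : ℚ)
          = (((k'+1:ℕ):ℚ) + 1) * ((k'+1).choose (i+1) : ℚ) := by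
        have := chooseL (k'+1) (i+1); push_cast at this ⊢; linear_combination this
      have e3 : ((k':ℚ)+1) * ((2*k'+a+2).choose (k'+1) : ℚ)
          = (((2*k'+a+2:ℕ):ℚ) - k') * ((2*k'+a+2).choose k' : ℚ) := chooseR (2*k'+a+2) k'
      have e4 : ((2*k'+a+3).choose (k'+1) : ℚ)
          = ((2*k'+a+2).choose k' : ℚ) + ((2*k'+a+2).choose (k'+1) : ℚ) := by
        have h0 := Nat.choose_succ_succ (2*k'+a+2) k'
        have h1 := congrArg (Nat.cast (R := ℚ)) h0
        push_cast at h1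
        convert h1 using 2 <;> omega
      have e5 := centralQ a
      have hki' : (i:ℚ) ≤ (k':ℚ) := by exact_mod_cast (by omega : i ≤ k')
      have d1 : ((i:ℚ)+1) ≠ 0 := by positivity
      have d2 : ((k':ℚ)+1-(i:ℚ)) ≠ 0 := by intro hc; nlinarith
      have d3 : ((k':ℚ)+a+2) ≠ 0 := by positivity
      have d4 : (2*(a:ℚ)+2) ≠ 0 := by positivity
      have d5 : (2*(a:ℚ)+1) ≠ 0 := by positivity
      have d6 : ((k':ℚ)+1) ≠ 0 := by positivity
      push_cast at e1 e2 e3 ⊢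
      -- solved forms
      have s1 : ((k'+1).choose i : ℚ)
          = ((i:ℚ)+1) * ((k'+1).choose (i+1) : ℚ) / ((k':ℚ)+1-(i:ℚ)) := by
        field_simp
        linear_combination -e1
      have s2 : ((k'+1+1).choose (i+1) : ℚ)
          = ((k':ℚ)+2) * ((k'+1).choose (i+1) : ℚ) / ((k':ℚ)+1-(i:ℚ)) := by
        field_simp
        linear_combination e2
      have s3 : ((2*k'+a+2).choose k' : ℚ)
          = ((k':ℚ)+1) * ((2*k'+a+2).choose (k'+1) : ℚ) / ((k':ℚ)+a+2) := by
        field_simp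
        linear_combination -e3
      have s4 : ((2*a).choose a : ℚ)
          = ((a:ℚ)+1)^2 * ((2*a+2).choose (a+1) : ℚ) / ((2*(a:ℚ)+2) * (2*(a:ℚ)+1)) := by
        rw [eq_div_iff (by positivity)]
        linear_combination -e5
      rw [s1, s2, e4, s3, s4]
      field_simp
      ring
  -- assemble
  have hsplit : Dq (i+1) (m+1) = (∑ k ∈ Finset.range (m+1), T (m+1) (i+1) k)
      + T (m+1) (i+1) (m+1) := by
    rw [Dq_T, Finset.sum_range_succ]
  have htele : ∑ k ∈ Finset.range (m+1),
      (Haux m (i+1) k - Haux m (i+1) (k+1)) = Haux m (i+1) 0 - Haux m (i+1) (m+1) :=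
    Finset.sum_range_sub' (Haux m (i+1)) (m+1)
  have hmain : ∑ k ∈ Finset.range (m+1), (2*((m:ℚ)+1) * T (m+1) (i+1) k)
      = 8*((m:ℚ)+(i:ℚ)+1) * Dq i m + 4*(4*(m:ℚ)+2*(i:ℚ)+5) * Dq (i+1) m
        + (Haux m (i+1) 0 - Haux m (i+1) (m+1)) := by
    rw [Finset.sum_congr rfl (fun k hk => key k (Finset.mem_range.mp hk))]
    rw [Finset.sum_add_distrib, Finset.sum_add_distrib, htele, Dq_T, Dq_T,
      ← Finset.mul_sum, ← Finset.mul_sum]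
  have hbound : 2*((m:ℚ)+1) * T (m+1) (i+1) (m+1) = Haux m (i+1) (m+1) := by
    rw [Haux_succ]
    have n1 : 2*(m+1) - 2*(m+1) = 0 := by omega
    have n2 : (m+1) - (m+1) = 0 := by omega
    have n3 : (m+1) + (m+1) = 2*m+2 := by omega
    have n4 : 2*m - 2*m = 0 := by omega
    have n5 : m - m = 0 := by omega
    have n6 : m + m + 1 = 2*m+1 := by omega
    simp only [T, n1, n2, n3, n4, n5, n6, Nat.choose_self, Nat.choose_zero_right,
      Nat.cast_one, chooseBig m]
    ring
  rw [hsplit, mul_add, Finset.mul_sum, hmain, hbound, Haux_zero]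
  ring

set_option maxHeartbeats 1600000 in
lemma rec10 (m : ℕ) :
    2*((m:ℚ)+1) * Dq 0 (m+1) = 4*(4*(m:ℚ)+3) * Dq 0 m := by
  have key : ∀ k, k < m+1 →
      2*((m:ℚ)+1) * T (m+1) 0 k
        = 4*(4*(m:ℚ)+3) * T m 0 k + (Haux m 0 k - Haux m 0 (k+1)) := by
    intro k hk
    rcases k with _ | k'
    · -- k = 0
      rw [Haux_zero, Haux_succ]
      have n1 : 2*(m+1) - 2*0 = 2*m+2 := by omega
      have n2 : (m+1) - 0 = m+1 := by omega
      have n3 : 2*m - 2*0 = 2*m := by omega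
      have n4 : m - 0 = m := by omega
      simp only [T, n1, n2, n3, n4, Nat.add_zero, Nat.choose_zero_right, Nat.choose_self,
        Nat.cast_one, pow_zero, pow_one, Nat.sub_zero, Nat.mul_zero]
      have e := centralQ m
      have h2m : ((2*m+2).choose (m+1) : ℚ) = (2*(m:ℚ)+2) * (2*(m:ℚ)+1) *
          ((2*m).choose m : ℚ) / (((m:ℚ)+1)^2) := by
        rw [eq_div_iff (by positivity)]
        linear_combination e
      rw [h2m]
      field_simp
      ring
    · -- k ≥ 1 : main case
      obtain ⟨a, rfl⟩ : ∃ a, m = k'+1+a := ⟨m-(k'+1), by omega⟩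
      have n1 : 2*(k'+1+a) - 2*(k'+1) = 2*a := by omega
      have n2 : (k'+1+a) - (k'+1) = a := by omega
      have n3 : (k'+1+a) + (k'+1) = 2*k'+a+2 := by omega
      have n4 : 2*(k'+1+a+1) - 2*(k'+1) = 2*a+2 := by omega
      have n5 : (k'+1+a+1) - (k'+1) = a+1 := by omega
      have n6 : (k'+1+a+1) + (k'+1) = 2*k'+a+3 := by omega
      have n7 : 2*(k'+1+a) - 2*k' = 2*a+2 := by omega
      have n8 : (k'+1+a) - k' = a+1 := by omega
      have n9 : (k'+1+a) + k' + 1 = 2*k'+a+2 := by omega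
      have n10 : (k'+1+a) + (k'+1) + 1 = 2*k'+a+3 := by omega
      rw [Haux_succ, Haux_succ]
      simp only [T, n1, n2, n3, n4, n5, n6, n7, n8, n9, n10, Nat.choose_zero_right,
        Nat.cast_one]
      have e3 : ((k':ℚ)+1) * ((2*k'+a+2).choose (k'+1) : ℚ)
          = (((2*k'+a+2:ℕ):ℚ) - k') * ((2*k'+a+2).choose k' : ℚ) := chooseR (2*k'+a+2) k'
      have e4 : ((2*k'+a+3).choose (k'+1) : ℚ)
          = ((2*k'+a+2).choose k' : ℚ) + ((2*k'+a+2).choose (k'+1) : ℚ) := by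
        have h0 := Nat.choose_succ_succ (2*k'+a+2) k'
        have h1 := congrArg (Nat.cast (R := ℚ)) h0
        push_cast at h1
        convert h1 using 2 <;> omega
      have e5 := centralQ a
      have d3 : ((k':ℚ)+a+2) ≠ 0 := by positivity
      have d4 : (2*(a:ℚ)+2) ≠ 0 := by positivity
      have d5 : (2*(a:ℚ)+1) ≠ 0 := by positivity
      have d6 : ((k':ℚ)+1) ≠ 0 := by positivity
      push_cast at e3 ⊢
      have s3 : ((2*k'+a+2).choose k' : ℚ)
          = ((k':ℚ)+1) * ((2*k'+a+2).choose (k'+1) : ℚ) / ((k':ℚ)+a+2) := by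
        field_simp
        linear_combination -e3
      have s4 : ((2*a).choose a : ℚ)
          = ((a:ℚ)+1)^2 * ((2*a+2).choose (a+1) : ℚ) / ((2*(a:ℚ)+2) * (2*(a:ℚ)+1)) := by
        rw [eq_div_iff (by positivity)]
        linear_combination -e5
      rw [e4, s3, s4]
      field_simp
      ring
  have hsplit : Dq 0 (m+1) = (∑ k ∈ Finset.range (m+1), T (m+1) 0 k)
      + T (m+1) 0 (m+1) := by
    rw [Dq_T, Finset.sum_range_succ]
  have htele : ∑ k ∈ Finset.range (m+1),
      (Haux m 0 k - Haux m 0 (k+1)) = Haux m 0 0 - Haux m 0 (m+1) :=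
    Finset.sum_range_sub' (Haux m 0) (m+1)
  have hmain : ∑ k ∈ Finset.range (m+1), (2*((m:ℚ)+1) * T (m+1) 0 k)
      = 4*(4*(m:ℚ)+3) * Dq 0 m + (Haux m 0 0 - Haux m 0 (m+1)) := by
    rw [Finset.sum_congr rfl (fun k hk => key k (Finset.mem_range.mp hk))]
    rw [Finset.sum_add_distrib, htele, Dq_T, ← Finset.mul_sum]
  have hbound : 2*((m:ℚ)+1) * T (m+1) 0 (m+1) = Haux m 0 (m+1) := by
    rw [Haux_succ]
    have n1 : 2*(m+1) - 2*(m+1) = 0 := by omega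
    have n2 : (m+1) - (m+1) = 0 := by omega
    have n3 : (m+1) + (m+1) = 2*m+2 := by omega
    have n4 : 2*m - 2*m = 0 := by omega
    have n5 : m - m = 0 := by omega
    have n6 : m + m + 1 = 2*m+1 := by omega
    simp only [T, n1, n2, n3, n4, n5, n6, Nat.choose_self, Nat.choose_zero_right,
      Nat.cast_one, chooseBig m]
    ring
  rw [hsplit, mul_add, Finset.mul_sum, hmain, hbound, Haux_zero]
  ring

lemma lemA (m : ℕ) : ∀ t i : ℕ, i + t = m →
    ((i:ℚ)+1) * Dq (i+1) m ≤ ((m:ℚ) - i) * Dq i m := by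
  intro t
  induction t with
  | zero =>
    intro i hi
    have him : i = m := by omega
    subst him
    rw [Dq_zero (by omega : i < i + 1)]
    simp
  | succ t ih =>
    intro i hi
    have h1 : i + 1 ≤ m := by omega
    have hrec := rec2 m i h1
    have hih := ih (i+1) (by omega)
    push_cast at hih
    have p1 : 0 ≤ Dq (i+1) m := Dq_nonneg _ _
    have p2 : 0 ≤ Dq (i+2) m := Dq_nonneg _ _
    have hm : (0:ℚ) < (m:ℚ) + i + 1 := by positivity
    have hih' := mul_le_mul_of_nonneg_left hih (show (0:ℚ) ≤ (i:ℚ)+1 by positivity)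
    nlinarith [hrec, hih', p1, hm, mul_nonneg (show (0:ℚ) ≤ (i:ℚ)+1 by positivity) p1]

lemma logconc (m j : ℕ) (h : j + 1 ≤ m) :
    Dq j m * Dq (j+2) m ≤ Dq (j+1) m ^ 2 := by
  have hrec := rec2 m j h
  have hA := lemA m (m - (j+1)) (j+1) (by omega)
  push_cast at hA
  set X := Dq j m
  set Y := Dq (j+1) m
  set Z := Dq (j+2) m
  have hX : 0 ≤ X := Dq_nonneg _ _
  have hY : 0 ≤ Y := Dq_nonneg _ _
  have hZ : 0 ≤ Z := Dq_nonneg _ _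
  have key : ((j:ℚ)+2)*((m:ℚ)-j)*((m:ℚ)+j+1) * (Y^2 - X*Z)
      = ((j:ℚ)+1)*((((m:ℚ)-j-1)*Y - ((j:ℚ)+2)*Z) * ((((m:ℚ)+j+2))*Y - ((j:ℚ)+2)*Z))
        + ((m:ℚ)^2+(m:ℚ)+(j:ℚ)^2+3*(j:ℚ)+2) * Y^2 := by
    linear_combination (-(((j:ℚ)+2)) * Z) * hrec
  have hfac1 : 0 ≤ ((m:ℚ)-j-1)*Y - ((j:ℚ)+2)*Z := by linarith
  have hfac2 : 0 ≤ ((m:ℚ)+j+2)*Y - ((j:ℚ)+2)*Z := by nlinarith [hY]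
  have hprod : 0 ≤ ((j:ℚ)+1)*((((m:ℚ)-j-1)*Y - ((j:ℚ)+2)*Z) * ((((m:ℚ)+j+2))*Y - ((j:ℚ)+2)*Z)) := by
    apply mul_nonneg (by positivity)
    exact mul_nonneg hfac1 hfac2
  have hY2 : 0 ≤ ((m:ℚ)^2+(m:ℚ)+(j:ℚ)^2+3*(j:ℚ)+2) * Y^2 := by positivity
  have h5 : 0 ≤ ((j:ℚ)+2)*((m:ℚ)-j)*((m:ℚ)+j+1) * (Y^2 - X*Z) := by
    rw [key]; exact add_nonneg hprod hY2
  have hjm : (j:ℚ) + 1 ≤ (m:ℚ) := by exact_mod_cast h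
  have hpos : 0 < ((j:ℚ)+2)*((m:ℚ)-j)*((m:ℚ)+j+1) := by
    apply mul_pos (mul_pos (by positivity) (by linarith)) (by positivity)
  nlinarith [h5, hpos]

lemma Dq_main {m i : ℕ} (him : i + 1 ≤ m) :
    Dq (i+1) m * Dq i (m+1) < Dq i m * Dq (i+1) (m+1) := by
  have hM1 : (0:ℚ) < (m:ℚ) + 1 := by positivity
  rcases i with _ | j
  · -- i = 0
    have r1 := rec10 m
    have r2 := rec1s m 0
    push_cast at r2
    have X0 : 0 < Dq 0 m := Dq_pos (by omega)
    have X1 : 0 < Dq 1 m := Dq_pos (by omega)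
    have r1' : 2*((m:ℚ)+1) * Dq 0 (m+1) * Dq 1 m = 4*(4*(m:ℚ)+3) * Dq 0 m * Dq 1 m := by
      linear_combination (Dq 1 m) * r1
    have r2' : 2*((m:ℚ)+1) * Dq (0+1) (m+1) * Dq 0 m
        = (8*((m:ℚ)+0+1) * Dq 0 m + 4*(4*(m:ℚ)+2*0+5) * Dq (0+1) m) * Dq 0 m := by
      linear_combination (Dq 0 m) * r2
    norm_num at r1' r2' ⊢
    nlinarith [r1', r2', mul_pos X0 X1, mul_pos X0 X0, hM1,
      mul_pos hM1 (mul_pos X0 X0), mul_pos hM1 (mul_pos X0 X1)]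
  · -- i = j+1
    have r1 := rec1s m j
    have r2 := rec1s m (j+1)
    push_cast at r1 r2
    have lc := logconc m j (by omega)
    have hY : 0 < Dq (j+1) m := Dq_pos (by omega)
    have hX : 0 < Dq j m := Dq_pos (by omega)
    have hZ : 0 ≤ Dq (j+2) m := Dq_nonneg _ _
    have r1' : 2*((m:ℚ)+1) * Dq (j+1) (m+1) * Dq (j+2) m
        = (8*((m:ℚ)+(j:ℚ)+1) * Dq j m + 4*(4*(m:ℚ)+2*(j:ℚ)+5) * Dq (j+1) m) * Dq (j+2) m := by
      linear_combination (Dq (j+2) m) * r1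
    have r2' : 2*((m:ℚ)+1) * Dq (j+2) (m+1) * Dq (j+1) m
        = (8*((m:ℚ)+(j:ℚ)+2) * Dq (j+1) m + 4*(4*(m:ℚ)+2*(j:ℚ)+7) * Dq (j+2) m) * Dq (j+1) m := by
      linear_combination (Dq (j+1) m) * r2
    have lc' : 8*((m:ℚ)+(j:ℚ)+1) * (Dq j m * Dq (j+2) m)
        ≤ 8*((m:ℚ)+(j:ℚ)+1) * Dq (j+1) m ^ 2 :=
      mul_le_mul_of_nonneg_left lc (by positivity)
    show Dq (j+1+1) m * Dq (j+1) (m+1) < Dq (j+1) m * Dq (j+1+1) (m+1)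
    nlinarith [r1', r2', lc', mul_pos hY hY, mul_nonneg hY.le hZ, hM1,
      mul_pos hM1 (mul_pos hY hY), mul_nonneg hM1.le (mul_nonneg hY.le hZ)]

theorem bmd_interlacing1 (m : ℕ) (hm : 2 ≤ m) (i : ℕ) (hi : i ≤ m - 1) :
    bmd i m * bmd (i + 1) (m + 1) > bmd (i + 1) m * bmd i (m + 1) := by
  have him : i + 1 ≤ m := by omega
  have e1 : ((i:ℤ) + 1) = ((i+1 : ℕ) : ℤ) := by push_cast; ring
  rw [show ((i:ℤ)) = ((i:ℕ):ℤ) from rfl] at *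
  rw [e1, bmd_natCast, bmd_natCast, bmd_natCast, bmd_natCast]
  have hc1 : (0:ℚ) < ((2:ℚ)^(2*m))⁻¹ := by positivity
  have hc2 : (0:ℚ) < ((2:ℚ)^(2*(m+1)))⁻¹ := by positivity
  have main := Dq_main him
  calc ((2:ℚ)^(2*m))⁻¹ * Dq (i+1) m * (((2:ℚ)^(2*(m+1)))⁻¹ * Dq i (m+1))
      = (((2:ℚ)^(2*m))⁻¹ * ((2:ℚ)^(2*(m+1)))⁻¹) * (Dq (i+1) m * Dq i (m+1)) := by ring
    _ < (((2:ℚ)^(2*m))⁻¹ * ((2:ℚ)^(2*(m+1)))⁻¹) * (Dq i m * Dq (i+1) (m+1)) := by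
        apply mul_lt_mul_of_pos_left main (by positivity)
    _ = ((2:ℚ)^(2*m))⁻¹ * Dq i m * (((2:ℚ)^(2*(m+1)))⁻¹ * Dq (i+1) (m+1)) := by ring
end

section
/- For all integers m ≥ 2 and 1 ≤ i ≤ m−1, the Boros-Moll coefficients satisfy (2i+4m+1) · d_i(m)² > (2i+4m+5) · d_{i-1}(m) · d_{i+1}(m). -/
namespace BMDAux

open Finset

set_option maxHeartbeats 1000000

lemma keyid_abstract (p j n : ℕ) (A Y Z A2 Y2 Z1 Z2 Z3 : ℚ)
    (e1 : A2*(((n:ℚ)+1)*((n:ℚ)+1)) = (2*(n:ℚ)+2)*(2*(n:ℚ)+1)*A)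
    (e2 : Y2*(2*(p:ℚ)+2*(j:ℚ)+(n:ℚ)+2) = Y*((p:ℚ)+(j:ℚ)+1))
    (e3 : Z1*((p:ℚ)+1) = Z*((j:ℚ)+1))
    (e4 : Z2*((p:ℚ)+2) = Z1*(j:ℚ))
    (e5 : Z3*((p:ℚ)+(j:ℚ)+1) = Z1*((p:ℚ)+1)) :
    2^(p+1+j) * A * Y *
      ( ((p:ℚ)+1)*((p:ℚ)+2)*Z2 - ((p:ℚ)+1)*(2*((p:ℚ)+1+(j:ℚ)+(n:ℚ))+1)*Z1
        + (((p:ℚ)+1+(j:ℚ)+(n:ℚ))+((p:ℚ)+1))*(((p:ℚ)+1+(j:ℚ)+(n:ℚ))+1-((p:ℚ)+1))*Z )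
    = 2^(p+1+j) * A * Y * Z *
        (((p:ℚ)+1+(j:ℚ)+(n:ℚ))*(((p:ℚ)+1+(j:ℚ)+(n:ℚ))+1) - ((p:ℚ)+1+(j:ℚ))*(((p:ℚ)+1+(j:ℚ))+1))
      - 2^(p+j) * A2 * Y2 * Z3 *
        (((p:ℚ)+1+(j:ℚ)+(n:ℚ))*(((p:ℚ)+1+(j:ℚ)+(n:ℚ))+1) - (((p:ℚ)+1+(j:ℚ))-1)*((p:ℚ)+1+(j:ℚ))) := by
  have hp1 : ((p:ℚ)+1) ≠ 0 := by positivity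
  have hp2 : ((p:ℚ)+2) ≠ 0 := by positivity
  have hpj : ((p:ℚ)+(j:ℚ)+1) ≠ 0 := by positivity
  have hd2 : (2*(p:ℚ)+2*(j:ℚ)+(n:ℚ)+2) ≠ 0 := by positivity
  have f1 : A2 = (2*(n:ℚ)+2)*(2*(n:ℚ)+1)*A / (((n:ℚ)+1)*((n:ℚ)+1)) := by
    rw [eq_div_iff (by positivity)]; linarith
  have f3 : Z1 = Z*((j:ℚ)+1)/((p:ℚ)+1) := by rw [eq_div_iff hp1]; linarith
  have f4 : Z2 = Z1*(j:ℚ)/((p:ℚ)+2) := by rw [eq_div_iff hp2]; linarith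
  have f5 : Z3 = Z1*((p:ℚ)+1)/((p:ℚ)+(j:ℚ)+1) := by rw [eq_div_iff hpj]; linarith
  have f2 : Y2 = Y*((p:ℚ)+(j:ℚ)+1)/(2*(p:ℚ)+2*(j:ℚ)+(n:ℚ)+2) := by
    rw [eq_div_iff hd2]; linarith
  rw [f4, f3, f5, f3, f1, f2]
  have hpow : (2:ℚ)^(p+1+j) = 2 * 2^(p+j) := by
    rw [show p+1+j = (p+j)+1 by ring, pow_succ]; ring
  rw [hpow]
  field_simp
  ring

/-- the telescoping certificate function -/
def Ftel (m i K : ℕ) : ℚ :=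
  (2:ℚ)^K * (Nat.choose (2*m-2*K) (m-K) : ℚ) * (Nat.choose (m+K) K : ℚ) *
    (Nat.choose K (i-1) : ℚ) * ((m:ℚ)*((m:ℚ)+1) - (K:ℚ)*((K:ℚ)+1))

lemma tele_step (m i k : ℕ) (h1 : 1 ≤ i) (h2 : i ≤ k) (h3 : k ≤ m) :
    (2:ℚ)^k * (Nat.choose (2*m-2*k) (m-k) : ℚ) * (Nat.choose (m+k) k : ℚ) *
      ((i:ℚ)*((i:ℚ)+1)*(Nat.choose k (i+1) : ℚ) - (i:ℚ)*(2*(m:ℚ)+1)*(Nat.choose k i : ℚ)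
        + ((m:ℚ)+(i:ℚ))*((m:ℚ)+1-(i:ℚ))*(Nat.choose k (i-1) : ℚ))
    = Ftel m i k - Ftel m i (k-1) := by
  obtain ⟨p, rfl⟩ : ∃ p, i = p+1 := ⟨i-1, by omega⟩
  obtain ⟨j, rfl⟩ : ∃ j, k = p+1+j := ⟨k-(p+1), by omega⟩
  obtain ⟨n, rfl⟩ : ∃ n, m = p+1+j+n := ⟨m-(p+1+j), by omega⟩
  unfold Ftel
  rw [show 2*(p+1+j+n)-2*(p+1+j) = 2*n by omega,
      show (p+1+j+n)-(p+1+j) = n by omega,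
      show (p+1+j+n)+(p+1+j) = 2*p+2*j+n+2 by omega,
      show (p+1)-1 = p by omega,
      show (p+1)+1 = p+2 by omega,
      show (p+1+j)-1 = p+j by omega,
      show 2*(p+1+j+n)-2*(p+j) = 2*n+2 by omega,
      show (p+1+j+n)-(p+j) = n+1 by omega,
      show (p+1+j+n)+(p+j) = 2*p+2*j+n+1 by omega,
      show p+1+j = p+j+1 by omega]
  push_cast
  have e1 := keyid_abstract p j n
    (Nat.choose (2*n) n : ℚ) (Nat.choose (2*p+2*j+n+2) (p+j+1) : ℚ)
    (Nat.choose (p+j+1) p : ℚ) (Nat.choose (2*n+2) (n+1) : ℚ)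
    (Nat.choose (2*p+2*j+n+1) (p+j) : ℚ) (Nat.choose (p+j+1) (p+1) : ℚ)
    (Nat.choose (p+j+1) (p+2) : ℚ) (Nat.choose (p+j) p : ℚ)
    ?_ ?_ ?_ ?_ ?_
  · push_cast at e1
    linear_combination e1
  · -- central step
    have h1 := Nat.add_one_mul_choose_eq (2*n+1) n
    have h2 := Nat.add_one_mul_choose_eq (2*n) n
    have h3 : (2*n+1).choose (n+1) = (2*n+1).choose n := by
      have := Nat.choose_symm (show n+1 ≤ 2*n+1 by omega)
      simpa [show 2*n+1-(n+1) = n by omega] using this.symm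
    rw [h3] at h2
    have h1' : ((2*n+2 : ℕ):ℚ) * ((2*n+1).choose n : ℚ) = ((2*n+2).choose (n+1) : ℚ) * ((n:ℚ)+1) := by
      exact_mod_cast congrArg (Nat.cast (R := ℚ)) h1
    have h2' : ((2*n+1 : ℕ):ℚ) * ((2*n).choose n : ℚ) = ((2*n+1).choose n : ℚ) * ((n:ℚ)+1) := by
      exact_mod_cast congrArg (Nat.cast (R := ℚ)) h2
    push_cast at h1' h2'
    nlinarith [h1', h2']
  · have h := Nat.add_one_mul_choose_eq (2*p+2*j+n+1) (p+j)
    have h' := congrArg (Nat.cast (R := ℚ)) h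
    push_cast [Nat.succ_eq_add_one] at h'
    linarith [h']
  · have h := Nat.choose_succ_right_eq (p+j+1) p
    have h' := congrArg (Nat.cast (R := ℚ)) h
    rw [show (p+j+1)-p = j+1 by omega] at h'
    push_cast at h'
    linarith [h']
  · have h := Nat.choose_succ_right_eq (p+j+1) (p+1)
    have h' := congrArg (Nat.cast (R := ℚ)) h
    rw [show (p+j+1)-(p+1) = j by omega] at h'
    push_cast at h'
    linarith [h']
  · have h := Nat.add_one_mul_choose_eq (p+j) p
    have h' := congrArg (Nat.cast (R := ℚ)) h
    push_cast [Nat.succ_eq_add_one] at h'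
    linarith [h']

def gk (m t k : ℕ) : ℚ :=
  (2:ℚ)^k * (Nat.choose (2*m-2*k) (m-k) : ℚ) * (Nat.choose (m+k) k : ℚ) * (Nat.choose k t : ℚ)

lemma tele_sum (m i : ℕ) (h1 : 1 ≤ i) (h2 : i ≤ m) :
    ∀ K, i-1 ≤ K → K ≤ m →
      ∑ k ∈ Icc (i-1) K,
        ((i:ℚ)*((i:ℚ)+1)*gk m (i+1) k - (i:ℚ)*(2*(m:ℚ)+1)*gk m i k
          + ((m:ℚ)+(i:ℚ))*((m:ℚ)+1-(i:ℚ))*gk m (i-1) k)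
      = Ftel m i K := by
  intro K
  induction K with
  | zero =>
    intro hK0 hK1
    have hi1 : i = 1 := by omega
    subst hi1
    simp only [Icc_self, sum_singleton, gk, Ftel]
    norm_num
    ring
  | succ K ih =>
    intro hK0 hK1
    rcases Nat.lt_or_ge K (i-1) with h | h
    · have : i-1 = K+1 := by omega
      rw [← this, Icc_self, sum_singleton]
      have hlt : i-1 < i := by omega
      have hz1 : Nat.choose (i-1) i = 0 := Nat.choose_eq_zero_of_lt hlt
      have hz2 : Nat.choose (i-1) (i+1) = 0 := Nat.choose_eq_zero_of_lt (by omega)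
      simp only [gk, Ftel, hz1, hz2, Nat.choose_self, Nat.cast_zero, Nat.cast_one]
      have hc : ((i-1 : ℕ) : ℚ) = (i:ℚ) - 1 := by
        push_cast [Nat.cast_sub h1]; ring
      rw [hc]
      ring
    · rw [Finset.sum_Icc_succ_top (by omega)]
      rw [ih h (by omega)]
      have := tele_step m i (K+1) h1 (by omega) hK1
      simp only [gk] at this ⊢
      rw [show K+1-1 = K by omega] at this
      linarith [this]

def Sbm (m t : ℕ) : ℚ := ∑ k ∈ Icc t m, gk m t k

lemma sum_ext (m i t : ℕ) (hle : i-1 ≤ t) :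
    ∑ k ∈ Icc (i-1) m, gk m t k = Sbm m t := by
  rw [Sbm]
  apply (Finset.sum_subset ?_ ?_).symm
  · intro x hx
    simp only [mem_Icc] at hx ⊢
    omega
  · intro x hx hx'
    simp only [mem_Icc] at hx hx'
    have : x < t := by omega
    simp [gk, Nat.choose_eq_zero_of_lt this]

lemma Sbm_rec (m i : ℕ) (h1 : 1 ≤ i) (h2 : i ≤ m) :
    (i:ℚ)*((i:ℚ)+1)*Sbm m (i+1)
      = (i:ℚ)*(2*(m:ℚ)+1)*Sbm m i - ((m:ℚ)+(i:ℚ))*((m:ℚ)+1-(i:ℚ))*Sbm m (i-1) := by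
  have h := tele_sum m i h1 h2 m (by omega) le_rfl
  have hF : Ftel m i m = 0 := by simp [Ftel]
  rw [hF] at h
  rw [Finset.sum_add_distrib, Finset.sum_sub_distrib] at h
  rw [← Finset.mul_sum, ← Finset.mul_sum, ← Finset.mul_sum] at h
  rw [sum_ext m i (i+1) (by omega), sum_ext m i i (by omega), sum_ext m i (i-1) le_rfl] at h
  linarith [h]

lemma Sbm_pos (m t : ℕ) (ht : t ≤ m) : 0 < Sbm m t := by
  rw [Sbm]
  apply Finset.sum_pos'
  · intro k hk
    simp only [mem_Icc] at hk
    unfold gk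
    positivity
  · refine ⟨m, by simp [mem_Icc, ht], ?_⟩
    unfold gk
    have h1 : 2*m-2*m = 0 := by omega
    have h2 : m-m = 0 := by omega
    rw [h1, h2]
    simp only [Nat.choose_self, Nat.choose_zero_right]
    have : (0:ℚ) < (Nat.choose (m+m) m : ℚ) := by
      exact_mod_cast Nat.choose_pos (by omega)
    have h3 : (0:ℚ) < (Nat.choose m t : ℚ) := by
      exact_mod_cast Nat.choose_pos ht
    positivity

lemma Sbm_top (m : ℕ) : Sbm m (m+1) = 0 := by
  rw [Sbm, Icc_eq_empty (by omega), sum_empty]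

lemma bmd_eq (t m : ℕ) : bmd (t:ℤ) m = (2:ℚ) ^ (-(2 * (m : ℤ))) * Sbm m t := by
  rw [bmd, if_pos (by positivity), Int.toNat_natCast]
  rfl

lemma Sbm_inv (m : ℕ) : ∀ t i : ℕ, 1 ≤ i → i ≤ m → m - i = t →
    ((m:ℚ)+1-(i:ℚ)) * Sbm m (i-1) ≥ (i:ℚ) * Sbm m i := by
  intro t
  induction t with
  | zero =>
    intro i h1 h2 ht
    have him : i = m := by omega
    subst him
    have hrec := Sbm_rec i i h1 le_rfl
    rw [Sbm_top i] at hrec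
    have hpos := Sbm_pos i i le_rfl
    have h1q : (1:ℚ) ≤ (i:ℚ) := by exact_mod_cast h1
    nlinarith [hrec, hpos, h1q, mul_pos (show (0:ℚ) < (i:ℚ) by linarith) hpos]
  | succ t ih =>
    intro i h1 h2 ht
    have hi1 : i + 1 ≤ m := by omega
    have hprev := ih (i+1) (by omega) hi1 (by omega)
    rw [show (i+1)-1 = i by omega] at hprev
    push_cast at hprev
    have hrec := Sbm_rec m i h1 (by omega)
    have hp0 := Sbm_pos m i (by omega)
    have h1q : (1:ℚ) ≤ (i:ℚ) := by exact_mod_cast h1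
    have hmq : (i:ℚ) + 1 ≤ (m:ℚ) := by exact_mod_cast hi1
    have hi0 : (0:ℚ) ≤ (i:ℚ) := by linarith
    have hmi : (0:ℚ) < (m:ℚ) + (i:ℚ) := by linarith
    have hmul := mul_le_mul_of_nonneg_left hprev hi0
    nlinarith [hrec, hmul, mul_pos (show (0:ℚ) < (i:ℚ) by linarith) hp0, hmi]

end BMDAux

set_option maxHeartbeats 1000000 in
open BMDAux in
theorem bmd_ineq_A1 (m : ℕ) (hm : 2 ≤ m) (i : ℕ) (hi1 : 1 ≤ i) (hi2 : i ≤ m - 1) :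
    (2 * (i : ℚ) + 4 * (m : ℚ) + 1) * bmd i m ^ 2 >
      (2 * (i : ℚ) + 4 * (m : ℚ) + 5) * bmd ((i : ℤ) - 1) m * bmd (i + 1) m := by
  have hi2' : i + 1 ≤ m := by omega
  have e0 : bmd (i:ℤ) m = (2:ℚ) ^ (-(2 * (m : ℤ))) * Sbm m i := bmd_eq i m
  have e1 : bmd ((i:ℤ)-1) m = (2:ℚ) ^ (-(2 * (m : ℤ))) * Sbm m (i-1) := by
    rw [show (i:ℤ)-1 = ((i-1 : ℕ) : ℤ) by omega]; exact bmd_eq (i-1) m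
  have e2 : bmd ((i:ℤ)+1) m = (2:ℚ) ^ (-(2 * (m : ℤ))) * Sbm m (i+1) := by
    rw [show (i:ℤ)+1 = ((i+1 : ℕ) : ℤ) by push_cast; ring]; exact bmd_eq (i+1) m
  rw [e0, e1, e2]
  have hrec := Sbm_rec m i hi1 (by omega)
  have hinv := Sbm_inv m (m-i) i hi1 (by omega) rfl
  have hxpos := Sbm_pos m (i-1) (by omega)
  have hypos := Sbm_pos m i (by omega)
  have hzpos := Sbm_pos m (i+1) hi2'
  have h1q : (1:ℚ) ≤ (i:ℚ) := by exact_mod_cast hi1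
  have hmq : (i:ℚ) + 1 ≤ (m:ℚ) := by exact_mod_cast hi2'
  set c : ℚ := (2:ℚ) ^ (-(2 * (m : ℤ))) with hc
  have hcpos : 0 < c := by rw [hc]; positivity
  set x := Sbm m (i-1) with hx
  set y := Sbm m i with hy
  set z := Sbm m (i+1) with hz
  have key : (2 * (i : ℚ) + 4 * (m : ℚ) + 1) * y^2 > (2 * (i : ℚ) + 4 * (m : ℚ) + 5) * x * z := by
    set s : ℚ := (m:ℚ) + 1 - (i:ℚ) with hs
    have hs2 : (2:ℚ) ≤ s := by rw [hs]; linarith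
    have hs0 : (0:ℚ) ≤ s := by linarith
    set u : ℚ := s * x - (i:ℚ) * y with hu
    have hu0 : 0 ≤ u := by rw [hu]; linarith [hinv]
    have hz' : (i:ℚ)*((i:ℚ)+1)*z = (i:ℚ)*(2*(m:ℚ)+1)*y - ((m:ℚ)+(i:ℚ))*s*x := by
      linarith [hrec]
    have hG : s^2 * ((i:ℚ)*((i:ℚ)+1)*((2 * (i : ℚ) + 4 * (m : ℚ) + 1) * y^2
          - (2 * (i : ℚ) + 4 * (m : ℚ) + 5) * x * z))
        = (2*(i:ℚ)+4*(m:ℚ)+5)*((m:ℚ)+(i:ℚ))*s*u^2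
          + (i:ℚ)*(2*(i:ℚ)+4*(m:ℚ)+5)*(2*(i:ℚ)-1)*s*(u*y)
          + (i:ℚ)*(4*(m:ℚ)+1-2*(i:ℚ))*s^2*y^2 := by
      rw [hu]
      linear_combination (-(2*(i:ℚ)+4*(m:ℚ)+5)*x*s^2) * hz'
    have c1 : (0:ℚ) ≤ 2*(i:ℚ)+4*(m:ℚ)+5 := by positivity
    have c2 : (0:ℚ) ≤ (m:ℚ)+(i:ℚ) := by positivity
    have t1 : 0 ≤ (2*(i:ℚ)+4*(m:ℚ)+5)*((m:ℚ)+(i:ℚ))*s*u^2 :=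
      mul_nonneg (mul_nonneg (mul_nonneg c1 c2) hs0) (sq_nonneg u)
    have t2 : 0 ≤ (i:ℚ)*(2*(i:ℚ)+4*(m:ℚ)+5)*(2*(i:ℚ)-1)*s*(u*y) :=
      mul_nonneg (mul_nonneg (mul_nonneg (mul_nonneg (by linarith) c1) (by linarith)) hs0)
        (mul_nonneg hu0 hypos.le)
    have t3 : 0 < (i:ℚ)*(4*(m:ℚ)+1-2*(i:ℚ))*s^2*y^2 :=
      mul_pos (mul_pos (mul_pos (by linarith) (by linarith))
        (pow_pos (by linarith) 2)) (pow_pos hypos 2)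
    have hrhs : 0 < s^2 * ((i:ℚ)*((i:ℚ)+1)*((2 * (i : ℚ) + 4 * (m : ℚ) + 1) * y^2
          - (2 * (i : ℚ) + 4 * (m : ℚ) + 5) * x * z)) := by
      rw [hG]; linarith
    have h6 : 0 < s^2 * ((i:ℚ)*((i:ℚ)+1)) :=
      mul_pos (pow_pos (by linarith) 2) (mul_pos (by linarith) (by linarith))
    nlinarith [hrhs, h6]
  nlinarith [key, mul_pos hcpos hcpos, hxpos, hypos, hzpos, mul_pos hxpos hzpos]
end
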